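/- arXiv:2407.08560 — 6 statements merged into one kernel-verified Lean document; each statement's English description precedes it below -/
import Mathlib

section
/- Under the stated conditional average treatment effect setup with fixed first-stage estimates, define Δ₁ := (1 − T/π⁰(S))·(μ̂(1,S) − μ⁰(1,S)) + (T/π̂(S) − T/π⁰(S))·(Y(1) − μ⁰(1,S)) − (1 − (1−T)/(1−π⁰(S)))·(μ̂(0,S) − μ⁰(0,S)) − ((1−T)/(1−π̂(S)) − (1−T)/(1−π⁰(S)))·(Y(0) − μ⁰(0,S)). Then E[Δ₁ · h(S)] = 0 for every bounded measurable h : ℝ^d → ℝ; equivalently, the conditional expectation of Δ₁ given the σ-algebra generated by S is 0 almost surely. -/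
/-!
`Δ₁` is the difference of the arm terms
`(1 - W/p(S))·(μh - μ)(S) + (W/ph(S) - W/p(S))·(Y' - μ(S))` for
`(W, p, Y') = (T, π⁰, Y(1))` and `(1 - T, 1 - π⁰, Y(0))`. Multiplied by `h(S)` and with the
denominator `p(S)` cleared, an arm term becomes `(W - p(S))·F(S) + (W·Y' - W·μ(S))·G(S)` with
`F`, `G` bounded, and both `W - p(S)` and `W·Y' - W·μ(S) = W·Y - W·μ(S)` have conditional mean zero given
`S`: these are the defining properties of the propensity score and of the outcome regression.
Positivity of `π⁰` holds only almost surely, so `π⁰` is first replaced by `max (1/M) π⁰`, which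
makes `F` bounded and changes nothing almost surely.
-/

open MeasureTheory ProbabilityTheory

def BddFun {α : Type*} (f : α → ℝ) : Prop := ∃ C, ∀ x, |f x| ≤ C

namespace BddFun

variable {α β : Type*} {f g : α → ℝ}

lemma const (c : ℝ) : BddFun fun _ : α => c := ⟨|c|, fun _ => le_rfl⟩

lemma comp (hf : BddFun f) (k : β → α) : BddFun fun x => f (k x) :=
  let ⟨C, hC⟩ := hf
  ⟨C, fun x => hC (k x)⟩

lemma add (hf : BddFun f) (hg : BddFun g) : BddFun fun x => f x + g x :=
  let ⟨C, hC⟩ := hf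
  let ⟨D, hD⟩ := hg
  ⟨C + D, fun x => (abs_add_le _ _).trans (add_le_add (hC x) (hD x))⟩

lemma sub (hf : BddFun f) (hg : BddFun g) : BddFun fun x => f x - g x :=
  let ⟨C, hC⟩ := hf
  let ⟨D, hD⟩ := hg
  ⟨C + D, fun x => (abs_sub _ _).trans (add_le_add (hC x) (hD x))⟩

lemma mul (hf : BddFun f) (hg : BddFun g) : BddFun fun x => f x * g x :=
  let ⟨C, hC⟩ := hf
  let ⟨D, hD⟩ := hg
  ⟨C * D, fun x => by
    rw [abs_mul]
    exact mul_le_mul (hC x) (hD x) (abs_nonneg _) ((abs_nonneg _).trans (hC x))⟩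

lemma max (hf : BddFun f) (hg : BddFun g) : BddFun fun x => Max.max (f x) (g x) :=
  let ⟨C, hC⟩ := hf
  let ⟨D, hD⟩ := hg
  ⟨Max.max C D, fun x => abs_max_le_max_abs_abs.trans (max_le_max (hC x) (hD x))⟩

lemma inv_of_le {c : ℝ} (hc : 0 < c) (hf : ∀ x, c ≤ f x) : BddFun fun x => (f x)⁻¹ :=
  ⟨c⁻¹, fun x => by
    rw [abs_of_pos (inv_pos.2 (hc.trans_le (hf x)))]
    exact inv_anti₀ hc (hf x)⟩

lemma div (hf : BddFun f) (hg : BddFun fun x => (g x)⁻¹) : BddFun fun x => f x / g x := by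
  simpa only [div_eq_mul_inv] using hf.mul hg

lemma integrable [MeasurableSpace α] {μ : Measure α} [IsFiniteMeasure μ] (hf : BddFun f)
    (hm : AEStronglyMeasurable f μ) : Integrable f μ :=
  let ⟨C, hC⟩ := hf
  .of_bound hm C (ae_of_all _ hC)

end BddFun

section

variable {Ω E : Type*} (S : Ω → E) {W Y : Ω → ℝ} {p μ ph μh h : E → ℝ}

noncomputable def armError (W Y : Ω → ℝ) (p μ ph μh : E → ℝ) (ω : Ω) : ℝ :=
  (1 - W ω / p (S ω)) * (μh (S ω) - μ (S ω)) + (W ω / ph (S ω) - W ω / p (S ω)) * (Y ω - μ (S ω))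

lemma armError_mul_eq (ω : Ω) (hp : p (S ω) ≠ 0) :
    armError S W Y p μ ph μh ω * h (S ω) =
      (W ω - p (S ω)) * ((μ (S ω) - μh (S ω)) * h (S ω) / p (S ω))
      + (W ω * Y ω - W ω * μ (S ω)) * (((ph (S ω))⁻¹ - (p (S ω))⁻¹) * h (S ω)) := by
  simp only [armError]
  field_simp
  ring

end

section

variable {Ω E : Type*} [MeasurableSpace Ω] [MeasurableSpace E] {P : Measure Ω} {S : Ω → E}

lemma integrable_mul_comp [IsFiniteMeasure P] {X : Ω → ℝ} {g : E → ℝ} (hS : Measurable S)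
    (hX : Measurable X) (hXb : BddFun X) (hg : Measurable g) (hgb : BddFun g) :
    Integrable (fun ω => X ω * g (S ω)) P :=
  (hXb.mul (hgb.comp S)).integrable (by fun_prop)

variable (P S) in
/-- `E[X | S] = E[Z | S]`, tested against bounded measurable functions of `S`. -/
def CondMeanEq (X Z : Ω → ℝ) : Prop :=
  ∀ g : E → ℝ, Measurable g → BddFun g → ∫ ω, X ω * g (S ω) ∂P = ∫ ω, Z ω * g (S ω) ∂P

namespace CondMeanEq

variable {X Z : Ω → ℝ}

lemma congr_right_ae {Z' : Ω → ℝ} (h : CondMeanEq P S X Z) (hZ : Z =ᵐ[P] Z') :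
    CondMeanEq P S X Z' := fun g hg hgb =>
  (h g hg hgb).trans <| integral_congr_ae <| by filter_upwards [hZ] with ω hω; rw [hω]

lemma integral_sub_mul_eq_zero [IsFiniteMeasure P] (h : CondMeanEq P S X Z) (hS : Measurable S)
    (hX : Measurable X) (hXb : BddFun X) (hZ : Measurable Z) (hZb : BddFun Z) {g : E → ℝ}
    (hg : Measurable g) (hgb : BddFun g) : ∫ ω, (X ω - Z ω) * g (S ω) ∂P = 0 := by
  simp_rw [sub_mul]
  rw [integral_sub (integrable_mul_comp hS hX hXb hg hgb) (integrable_mul_comp hS hZ hZb hg hgb),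
    h g hg hgb, sub_self]

lemma one_sub [IsFiniteMeasure P] (h : CondMeanEq P S X Z) (hS : Measurable S)
    (hX : Measurable X) (hXb : BddFun X) (hZ : Measurable Z) (hZb : BddFun Z) :
    CondMeanEq P S (fun ω => 1 - X ω) (fun ω => 1 - Z ω) := fun g hg hgb => by
  have hone := integrable_mul_comp (P := P) hS measurable_const (.const 1) hg hgb
  simp_rw [sub_mul]
  rw [integral_sub hone (integrable_mul_comp hS hX hXb hg hgb),
    integral_sub hone (integrable_mul_comp hS hZ hZb hg hgb), h g hg hgb]

end CondMeanEq

variable {W Y : Ω → ℝ} {p μ ph μh h : E → ℝ} {c c' : ℝ}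

lemma integral_armError_mul_eq_zero_of_le [IsFiniteMeasure P] (hS : Measurable S)
    (hW : Measurable W) (hWb : BddFun W) (hY : Measurable Y) (hYb : BddFun Y)
    (hp : Measurable p) (hpb : BddFun p) (hc : 0 < c) (hpc : ∀ x, c ≤ p x)
    (hph : Measurable ph) (hc' : 0 < c') (hphc : ∀ x, c' ≤ ph x)
    (hμ : Measurable μ) (hμb : BddFun μ) (hμh : Measurable μh) (hμhb : BddFun μh)
    (hprop : CondMeanEq P S W fun ω => p (S ω))
    (hout : CondMeanEq P S (fun ω => W ω * Y ω) fun ω => W ω * μ (S ω))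
    (hh : Measurable h) (hhb : BddFun h) :
    ∫ ω, armError S W Y p μ ph μh ω * h (S ω) ∂P = 0 := by
  have hp_inv : BddFun fun x => (p x)⁻¹ := .inv_of_le hc hpc
  have hph_inv : BddFun fun x => (ph x)⁻¹ := .inv_of_le hc' hphc
  have hF : BddFun fun x => (μ x - μh x) * h x / p x := ((hμb.sub hμhb).mul hhb).div hp_inv
  have hG : BddFun fun x => ((ph x)⁻¹ - (p x)⁻¹) * h x := (hph_inv.sub hp_inv).mul hhb
  have hWμ : BddFun fun ω => W ω * μ (S ω) := hWb.mul (hμb.comp S)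
  rw [integral_congr_ae (ae_of_all _ fun ω => armError_mul_eq S ω (hc.trans_le (hpc _)).ne'),
    integral_add (integrable_mul_comp hS (by fun_prop) (hWb.sub (hpb.comp S)) (by fun_prop) hF)
      (integrable_mul_comp hS (by fun_prop) ((hWb.mul hYb).sub hWμ) (by fun_prop) hG),
    hprop.integral_sub_mul_eq_zero hS hW hWb (by fun_prop) (hpb.comp S) (by fun_prop) hF,
    hout.integral_sub_mul_eq_zero hS (by fun_prop) (hWb.mul hYb) (by fun_prop) hWμ (by fun_prop) hG,
    add_zero]

lemma integrable_and_integral_armError_mul_eq_zero [IsFiniteMeasure P] (hS : Measurable S)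
    (hW : Measurable W) (hWb : BddFun W) (hY : Measurable Y) (hYb : BddFun Y)
    (hp : Measurable p) (hpb : BddFun p) (hc : 0 < c) (hpc : ∀ᵐ ω ∂P, c ≤ p (S ω))
    (hph : Measurable ph) (hc' : 0 < c') (hphc : ∀ x, c' ≤ ph x)
    (hμ : Measurable μ) (hμb : BddFun μ) (hμh : Measurable μh) (hμhb : BddFun μh)
    (hprop : CondMeanEq P S W fun ω => p (S ω))
    (hout : CondMeanEq P S (fun ω => W ω * Y ω) fun ω => W ω * μ (S ω))
    (hh : Measurable h) (hhb : BddFun h) :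
    Integrable (fun ω => armError S W Y p μ ph μh ω * h (S ω)) P ∧
      ∫ ω, armError S W Y p μ ph μh ω * h (S ω) ∂P = 0 := by
  set q : E → ℝ := fun x => max c (p x)
  have hqc : ∀ x, c ≤ q x := fun x => le_max_left _ _
  have hpq : (fun ω => p (S ω)) =ᵐ[P] fun ω => q (S ω) := by
    filter_upwards [hpc] with ω hω using (max_eq_right hω).symm
  have hae : (fun ω => armError S W Y p μ ph μh ω * h (S ω))
      =ᵐ[P] fun ω => armError S W Y q μ ph μh ω * h (S ω) := by
    filter_upwards [hpq] with ω hω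
    simp only [armError, hω]
  have hq_inv : BddFun fun ω => (q (S ω))⁻¹ := (BddFun.inv_of_le hc hqc).comp S
  have hph_inv : BddFun fun ω => (ph (S ω))⁻¹ := (BddFun.inv_of_le hc' hphc).comp S
  have hbdd : BddFun fun ω => armError S W Y q μ ph μh ω * h (S ω) :=
    ((((BddFun.const 1).sub (hWb.div hq_inv)).mul ((hμhb.comp S).sub (hμb.comp S))).add
      (((hWb.div hph_inv).sub (hWb.div hq_inv)).mul (hYb.sub (hμb.comp S)))).mul (hhb.comp S)
  refine ⟨(hbdd.integrable (by simp only [armError, q]; fun_prop)).congr hae.symm, ?_⟩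
  rw [integral_congr_ae hae]
  exact integral_armError_mul_eq_zero_of_le hS hW hWb hY hYb (by fun_prop)
    ((BddFun.const c).max hpb) hc hqc hph hc' hphc hμ hμb hμh hμhb (hprop.congr_right_ae hpq)
    hout hh hhb

end

theorem cate_first_order_error_orthogonal_general
    {Ω : Type*} [MeasurableSpace Ω]
    (P : Measure Ω) [IsProbabilityMeasure P]
    (d : ℕ) (S : Ω → (Fin d → ℝ)) (hS : Measurable S)
    (T : Ω → ℝ) (hT : Measurable T) (hT01 : ∀ ω, T ω = 0 ∨ T ω = 1)
    (Y0 Y1 : Ω → ℝ) (hY0 : Measurable Y0) (hY1 : Measurable Y1)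
    (hY0b : ∃ C, ∀ ω, |Y0 ω| ≤ C) (hY1b : ∃ C, ∀ ω, |Y1 ω| ≤ C)
    (Y : Ω → ℝ) (hYdef : ∀ ω, Y ω = T ω * Y1 ω + (1 - T ω) * Y0 ω)
    (M : ℝ) (hM : 0 < M)
    (π0 : (Fin d → ℝ) → ℝ) (hπ0m : Measurable π0) (hπ0b : ∃ C, ∀ x, |π0 x| ≤ C)
    (hπ0mom : ∀ h : (Fin d → ℝ) → ℝ, Measurable h → (∃ C, ∀ x, |h x| ≤ C) →
      ∫ ω, T ω * h (S ω) ∂P = ∫ ω, π0 (S ω) * h (S ω) ∂P)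
    (hpos : ∀ᵐ ω ∂P, 1 / M ≤ π0 (S ω) ∧ π0 (S ω) ≤ 1 - 1 / M)
    (μ1 μ0 : (Fin d → ℝ) → ℝ) (hμ1m : Measurable μ1) (hμ0m : Measurable μ0)
    (hμ1b : ∃ C, ∀ x, |μ1 x| ≤ C) (hμ0b : ∃ C, ∀ x, |μ0 x| ≤ C)
    (hμ1mom : ∀ h : (Fin d → ℝ) → ℝ, Measurable h → (∃ C, ∀ x, |h x| ≤ C) →
      ∫ ω, T ω * Y ω * h (S ω) ∂P = ∫ ω, T ω * μ1 (S ω) * h (S ω) ∂P)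
    (hμ0mom : ∀ h : (Fin d → ℝ) → ℝ, Measurable h → (∃ C, ∀ x, |h x| ≤ C) →
      ∫ ω, (1 - T ω) * Y ω * h (S ω) ∂P = ∫ ω, (1 - T ω) * μ0 (S ω) * h (S ω) ∂P)
    (K : ℝ) (hK : 0 < K)
    (πh μh1 μh0 : (Fin d → ℝ) → ℝ)
    (hπhm : Measurable πh) (hμh1m : Measurable μh1) (hμh0m : Measurable μh0)
    (hμh1b : ∃ C, ∀ x, |μh1 x| ≤ C) (hμh0b : ∃ C, ∀ x, |μh0 x| ≤ C)
    (hπhK : ∀ x, 1 / K ≤ πh x ∧ πh x ≤ 1 - 1 / K)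
    (Δ1 : Ω → ℝ)
    (hΔ1 : ∀ ω, Δ1 ω =
      (1 - T ω / π0 (S ω)) * (μh1 (S ω) - μ1 (S ω))
      + (T ω / πh (S ω) - T ω / π0 (S ω)) * (Y1 ω - μ1 (S ω))
      - (1 - (1 - T ω) / (1 - π0 (S ω))) * (μh0 (S ω) - μ0 (S ω))
      - ((1 - T ω) / (1 - πh (S ω)) - (1 - T ω) / (1 - π0 (S ω))) * (Y0 ω - μ0 (S ω))) :
    ∀ h : (Fin d → ℝ) → ℝ, Measurable h → (∃ C, ∀ x, |h x| ≤ C) →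
      ∫ ω, Δ1 ω * h (S ω) ∂P = 0 := by
  intro h hm hb
  have hTb : BddFun T := ⟨1, fun ω => by rcases hT01 ω with hω | hω <;> simp [hω]⟩
  have hTY1 : ∀ ω, T ω * Y ω = T ω * Y1 ω := fun ω => by
    rcases hT01 ω with hω | hω <;> simp [hYdef, hω]
  have hTY0 : ∀ ω, (1 - T ω) * Y ω = (1 - T ω) * Y0 ω := fun ω => by
    rcases hT01 ω with hω | hω <;> simp [hYdef, hω]
  obtain ⟨hint1, hzero1⟩ := integrable_and_integral_armError_mul_eq_zero (P := P) hS hT hTb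
    hY1 hY1b hπ0m hπ0b (one_div_pos.2 hM) (hpos.mono fun _ hω => hω.1) hπhm (one_div_pos.2 hK)
    (fun x => (hπhK x).1) hμ1m hμ1b hμh1m hμh1b hπ0mom
    (fun g hg hgb => by simpa only [hTY1] using hμ1mom g hg hgb) hm hb
  obtain ⟨hint0, hzero0⟩ := integrable_and_integral_armError_mul_eq_zero (P := P)
    (W := fun ω => 1 - T ω) (p := fun x => 1 - π0 x) (ph := fun x => 1 - πh x) hS (by fun_prop)
    ((BddFun.const 1).sub hTb) hY0 hY0b (by fun_prop) ((BddFun.const 1).sub hπ0b)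
    (one_div_pos.2 hM) (hpos.mono fun _ hω => by linarith [hω.2]) (by fun_prop)
    (one_div_pos.2 hK) (fun x => by linarith [(hπhK x).2]) hμ0m hμ0b hμh0m hμh0b
    (CondMeanEq.one_sub hπ0mom hS hT hTb (hπ0m.comp hS) (BddFun.comp hπ0b S))
    (fun g hg hgb => by simpa only [hTY0] using hμ0mom g hg hgb) hm hb
  have hsplit : ∀ ω, Δ1 ω * h (S ω) = armError S T Y1 π0 μ1 πh μh1 ω * h (S ω)
      - armError S (fun ω => 1 - T ω) Y0 (fun x => 1 - π0 x) μ0 (fun x => 1 - πh x) μh0 ω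
        * h (S ω) := fun ω => by
    rw [hΔ1]
    simp only [armError]
    ring
  simp_rw [hsplit]
  rw [integral_sub hint1 hint0, hzero1, hzero0, sub_zero]

/-- In the conditional average treatment effect setup with fixed first-stage
estimates, the first-order error term `Δ₁` of the doubly robust pseudo-outcome satisfies
`E[Δ₁ · h(S)] = 0` for every bounded measurable `h`. -/
theorem cate_first_order_error_orthogonal
    {Ω : Type*} [MeasurableSpace Ω] [StandardBorelSpace Ω] [Nonempty Ω]
    (P : Measure Ω) [IsProbabilityMeasure P]
    (d : ℕ) (S : Ω → (Fin d → ℝ)) (hS : Measurable S)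
    (T : Ω → ℝ) (hT : Measurable T) (hT01 : ∀ ω, T ω = 0 ∨ T ω = 1)
    (Y0 Y1 : Ω → ℝ) (hY0 : Measurable Y0) (hY1 : Measurable Y1)
    (hY0b : ∃ C, ∀ ω, |Y0 ω| ≤ C) (hY1b : ∃ C, ∀ ω, |Y1 ω| ≤ C)
    (Y : Ω → ℝ) (hYdef : ∀ ω, Y ω = T ω * Y1 ω + (1 - T ω) * Y0 ω)
    (M : ℝ) (hM : 0 < M)
    (π0 : (Fin d → ℝ) → ℝ) (hπ0m : Measurable π0) (hπ0b : ∃ C, ∀ x, |π0 x| ≤ C)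
    (hπ0mom : ∀ h : (Fin d → ℝ) → ℝ, Measurable h → (∃ C, ∀ x, |h x| ≤ C) →
      ∫ ω, T ω * h (S ω) ∂P = ∫ ω, π0 (S ω) * h (S ω) ∂P)
    (hpos : ∀ᵐ ω ∂P, 1 / M ≤ π0 (S ω) ∧ π0 (S ω) ≤ 1 - 1 / M)
    (μ1 μ0 : (Fin d → ℝ) → ℝ) (hμ1m : Measurable μ1) (hμ0m : Measurable μ0)
    (hμ1b : ∃ C, ∀ x, |μ1 x| ≤ C) (hμ0b : ∃ C, ∀ x, |μ0 x| ≤ C)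
    (hμ1mom : ∀ h : (Fin d → ℝ) → ℝ, Measurable h → (∃ C, ∀ x, |h x| ≤ C) →
      ∫ ω, T ω * Y ω * h (S ω) ∂P = ∫ ω, T ω * μ1 (S ω) * h (S ω) ∂P)
    (hμ0mom : ∀ h : (Fin d → ℝ) → ℝ, Measurable h → (∃ C, ∀ x, |h x| ≤ C) →
      ∫ ω, (1 - T ω) * Y ω * h (S ω) ∂P = ∫ ω, (1 - T ω) * μ0 (S ω) * h (S ω) ∂P)
    (hign : CondIndepFun (MeasurableSpace.comap S inferInstance) hS.comap_le
      (fun ω => (Y0 ω, Y1 ω)) T P)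
    (K : ℝ) (hK : 0 < K)
    (πh μh1 μh0 : (Fin d → ℝ) → ℝ)
    (hπhm : Measurable πh) (hμh1m : Measurable μh1) (hμh0m : Measurable μh0)
    (hμh1b : ∃ C, ∀ x, |μh1 x| ≤ C) (hμh0b : ∃ C, ∀ x, |μh0 x| ≤ C)
    (hπhK : ∀ x, 1 / K ≤ πh x ∧ πh x ≤ 1 - 1 / K)
    (Δ1 : Ω → ℝ)
    (hΔ1 : ∀ ω, Δ1 ω =
      (1 - T ω / π0 (S ω)) * (μh1 (S ω) - μ1 (S ω))
      + (T ω / πh (S ω) - T ω / π0 (S ω)) * (Y1 ω - μ1 (S ω))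
      - (1 - (1 - T ω) / (1 - π0 (S ω))) * (μh0 (S ω) - μ0 (S ω))
      - ((1 - T ω) / (1 - πh (S ω)) - (1 - T ω) / (1 - π0 (S ω))) * (Y0 ω - μ0 (S ω))) :
    ∀ h : (Fin d → ℝ) → ℝ, Measurable h → (∃ C, ∀ x, |h x| ≤ C) →
      ∫ ω, Δ1 ω * h (S ω) ∂P = 0 :=
  cate_first_order_error_orthogonal_general P d S hS T hT hT01 Y0 Y1 hY0 hY1 hY0b hY1b Y hYdef M hM
    π0 hπ0m hπ0b hπ0mom hpos μ1 μ0 hμ1m hμ0m hμ1b hμ0b hμ1mom hμ0mom K hK πh μh1 μh0 hπhm hμh1m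
    hμh0m hμh1b hμh0b hπhK Δ1 hΔ1
end

section
/- Under the stated dynamic treatment setup with fixed second-exposure estimates, define Δ₁ := (1 − T₂/ρ⁰(S̄₂))·(ν̂(S̄₂) − ν⁰(S̄₂)) + (T₂/ρ̂(S̄₂) − T₂/ρ⁰(S̄₂))·(Y(1,1) − ν⁰(S̄₂)). Then E[T₁ · Δ₁ · h(S₁)] = 0 for every bounded measurable h : ℝ^{d₁} → ℝ; equivalently, the conditional expectation of Δ₁ given σ(S₁) under the conditional probability measure P(· | T₁ = 1) is 0 almost surely. -/
open MeasureTheory ProbabilityTheory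

open scoped ENNReal

/-!
Write `X = (S₁, S₂)`. Pointwise,
`T₁ Δ₁ h(S₁) = T₁ (1 - T₂/ρ⁰(X)) g₁(X) + T₁ T₂ (Y(1,1) - ν⁰(X)) g₃(X)`
with `g₁ = (ν̂ - ν⁰) h` and `g₃ = (1/ρ̂ - 1/ρ⁰) h`, both functions of `X` alone. The first term has
mean zero by the moment condition defining `ρ⁰`, tested against `g₁/ρ⁰` (inverse propensity
weighting); the second by the moment condition defining `ν⁰`, tested against `g₃`. These test
functions are bounded only almost surely, since positivity of `ρ⁰` holds only almost surely;
clamping them at their essential bound changes them only on a null set, so the moment conditions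
still apply.
-/

section

variable {Ω β : Type*} [MeasurableSpace Ω] [MeasurableSpace β] {P : Measure Ω}

lemma MeasureTheory.MemLp.ae_abs_le_toReal_eLpNorm_top {f : Ω → ℝ} (hf : MemLp f ∞ P) :
    ∀ᵐ ω ∂P, |f ω| ≤ (eLpNorm f ∞ P).toReal := by
  filter_upwards [ae_le_eLpNormEssSup (f := f) (μ := P)] with ω hω
  rw [← Real.norm_eq_abs, ← ENNReal.ofReal_le_iff_le_toReal hf.eLpNorm_lt_top.ne, ofReal_norm]
  rwa [eLpNorm_exponent_top]

lemma memLp_top_of_ae_abs_le {f : Ω → ℝ} (hf : Measurable f) {C : ℝ}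
    (hC : ∀ᵐ ω ∂P, |f ω| ≤ C) : MemLp f ∞ P :=
  memLp_top_of_bound hf.aestronglyMeasurable C (by simpa only [Real.norm_eq_abs] using hC)

lemma memLp_top_of_abs_le {f : Ω → ℝ} (hf : Measurable f) (hb : ∃ C, ∀ ω, |f ω| ≤ C) :
    MemLp f ∞ P :=
  let ⟨_, hC⟩ := hb; memLp_top_of_ae_abs_le hf (.of_forall hC)

lemma memLp_top_comp_of_abs_le {f : β → ℝ} (hf : Measurable f) (hb : ∃ C, ∀ x, |f x| ≤ C)
    {X : Ω → β} (hX : Measurable X) : MemLp (fun ω => f (X ω)) ∞ P :=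
  memLp_top_of_abs_le (hf.comp hX) (hb.imp fun _ hC ω => hC (X ω))

lemma memLp_top_of_forall_eq_zero_or_eq_one {T : Ω → ℝ} (hT : Measurable T)
    (hT01 : ∀ ω, T ω = 0 ∨ T ω = 1) : MemLp T ∞ P :=
  memLp_top_of_abs_le hT ⟨1, fun ω => by rcases hT01 ω with h0 | h1 <;> simp [*]⟩

lemma memLp_top_inv_of_one_div_le {f : Ω → ℝ} (hf : Measurable f) {M : ℝ} (hM : 0 < M)
    (hfM : ∀ᵐ ω ∂P, 1 / M ≤ f ω) : MemLp (fun ω => (f ω)⁻¹) ∞ P := by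
  refine memLp_top_of_ae_abs_le (C := M) hf.inv (hfM.mono fun ω hω => ?_)
  rw [one_div] at hω
  rw [abs_of_pos (inv_pos.mpr ((inv_pos.mpr hM).trans_le hω))]
  exact inv_le_of_inv_le₀ hM hω

lemma integral_mul_comp_eq_of_memLp_top {F G : Ω → ℝ} {X : Ω → β}
    (hmom : ∀ h : β → ℝ, Measurable h → (∃ C, ∀ x, |h x| ≤ C) →
      ∫ ω, F ω * h (X ω) ∂P = ∫ ω, G ω * h (X ω) ∂P)
    {h : β → ℝ} (hh : Measurable h) (hhX : MemLp (fun ω => h (X ω)) ∞ P) :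
    ∫ ω, F ω * h (X ω) ∂P = ∫ ω, G ω * h (X ω) ∂P := by
  obtain ⟨C, hC⟩ : ∃ C, ∀ᵐ ω ∂P, |h (X ω)| ≤ C := ⟨_, hhX.ae_abs_le_toReal_eLpNorm_top⟩
  have hclamp : ∀ᵐ ω ∂P, max (-C) (min (h (X ω)) C) = h (X ω) := by
    filter_upwards [hC] with ω hω
    obtain ⟨hlo, hhi⟩ := abs_le.mp hω
    rw [min_eq_left hhi, max_eq_right hlo]
  have hmom_clamp := hmom (fun x => max (-C) (min (h x) C))
    (measurable_const.max (hh.min measurable_const))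
    ⟨|C|, fun x => abs_le.mpr ⟨(neg_le_neg (le_abs_self C)).trans (le_max_left _ _),
      max_le (neg_le_abs C) ((min_le_right _ _).trans (le_abs_self C))⟩⟩
  calc ∫ ω, F ω * h (X ω) ∂P = ∫ ω, F ω * max (-C) (min (h (X ω)) C) ∂P :=
        integral_congr_ae (hclamp.mono fun ω hω => by simp only [hω])
    _ = ∫ ω, G ω * max (-C) (min (h (X ω)) C) ∂P := hmom_clamp
    _ = ∫ ω, G ω * h (X ω) ∂P := integral_congr_ae (hclamp.mono fun ω hω => by simp only [hω])

lemma integral_mul_div_comp_eq_of_moment {T W : Ω → ℝ} {X : Ω → β} {ρ g : β → ℝ}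
    (hmom : ∀ h : β → ℝ, Measurable h → (∃ C, ∀ x, |h x| ≤ C) →
      ∫ ω, W ω * h (X ω) ∂P = ∫ ω, T ω * ρ (X ω) * h (X ω) ∂P)
    (hρm : Measurable ρ) (hρ : ∀ᵐ ω ∂P, ρ (X ω) ≠ 0) (hg : Measurable g)
    (hgX : MemLp (fun ω => g (X ω) / ρ (X ω)) ∞ P) :
    ∫ ω, W ω * (g (X ω) / ρ (X ω)) ∂P = ∫ ω, T ω * g (X ω) ∂P :=
  (integral_mul_comp_eq_of_memLp_top (G := fun ω => T ω * ρ (X ω)) (h := fun x => g x / ρ x) hmom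
      (hg.div hρm) hgX).trans
    (integral_congr_ae (hρ.mono fun ω hω => by field_simp))

lemma integral_mul_one_sub_div_comp_mul_eq_zero [IsFiniteMeasure P] {T T' : Ω → ℝ} {X : Ω → β}
    {ρ g : β → ℝ} {M : ℝ}
    (hmom : ∀ h : β → ℝ, Measurable h → (∃ C, ∀ x, |h x| ≤ C) →
      ∫ ω, T ω * T' ω * h (X ω) ∂P = ∫ ω, T ω * ρ (X ω) * h (X ω) ∂P)
    (hT : MemLp T ∞ P) (hT' : MemLp T' ∞ P) (hX : Measurable X) (hρm : Measurable ρ)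
    (hM : 0 < M) (hρ : ∀ᵐ ω ∂P, 1 / M ≤ ρ (X ω)) (hg : Measurable g)
    (hgX : MemLp (fun ω => g (X ω)) ∞ P) :
    ∫ ω, T ω * (1 - T' ω / ρ (X ω)) * g (X ω) ∂P = 0 := by
  have hρinv := memLp_top_inv_of_one_div_le (f := fun ω => ρ (X ω)) (hρm.comp hX) hM hρ
  have hgρ : MemLp (fun ω => g (X ω) / ρ (X ω)) ∞ P := by
    simpa only [div_eq_mul_inv] using hρinv.mul' hgX
  have hI1 : Integrable (fun ω => T ω * g (X ω)) P := (hgX.mul' hT).integrable le_top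
  have hI2 : Integrable (fun ω => T ω * T' ω * (g (X ω) / ρ (X ω))) P :=
    (hgρ.mul' (hT'.mul' hT (r := ∞))).integrable le_top
  have hρ0 : ∀ᵐ ω ∂P, ρ (X ω) ≠ 0 := hρ.mono fun ω hω => ((one_div_pos.mpr hM).trans_le hω).ne'
  calc ∫ ω, T ω * (1 - T' ω / ρ (X ω)) * g (X ω) ∂P
      = ∫ ω, T ω * g (X ω) - T ω * T' ω * (g (X ω) / ρ (X ω)) ∂P := by
        congr 1 with ω
        ring
    _ = 0 := by
      rw [integral_sub hI1 hI2, integral_mul_div_comp_eq_of_moment hmom hρm hρ0 hg hgρ, sub_self]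

lemma integral_mul_sub_comp_mul_eq_zero [IsFiniteMeasure P] {F Y : Ω → ℝ} {X : Ω → β}
    {ν g : β → ℝ}
    (hmom : ∀ h : β → ℝ, Measurable h → (∃ C, ∀ x, |h x| ≤ C) →
      ∫ ω, F ω * Y ω * h (X ω) ∂P = ∫ ω, F ω * ν (X ω) * h (X ω) ∂P)
    (hF : MemLp F ∞ P) (hY : MemLp Y ∞ P) (hν : MemLp (fun ω => ν (X ω)) ∞ P)
    (hg : Measurable g) (hgX : MemLp (fun ω => g (X ω)) ∞ P) :
    ∫ ω, F ω * (Y ω - ν (X ω)) * g (X ω) ∂P = 0 := by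
  have hI1 : Integrable (fun ω => F ω * Y ω * g (X ω)) P :=
    (hgX.mul' (hY.mul' hF (r := ∞))).integrable le_top
  have hI2 : Integrable (fun ω => F ω * ν (X ω) * g (X ω)) P :=
    (hgX.mul' (hν.mul' hF (r := ∞))).integrable le_top
  calc ∫ ω, F ω * (Y ω - ν (X ω)) * g (X ω) ∂P
      = ∫ ω, F ω * Y ω * g (X ω) - F ω * ν (X ω) * g (X ω) ∂P := by
        congr 1 with ω
        ring
    _ = 0 := by
      rw [integral_sub hI1 hI2, integral_mul_comp_eq_of_memLp_top hmom hg hgX, sub_self]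

lemma integral_mul_first_order_error_mul_eq_zero [IsFiniteMeasure P] {T T' Y : Ω → ℝ}
    {X : Ω → β} {ρ ν ρh νh g : β → ℝ} {M K : ℝ}
    (hmomρ : ∀ h : β → ℝ, Measurable h → (∃ C, ∀ x, |h x| ≤ C) →
      ∫ ω, T ω * T' ω * h (X ω) ∂P = ∫ ω, T ω * ρ (X ω) * h (X ω) ∂P)
    (hmomν : ∀ h : β → ℝ, Measurable h → (∃ C, ∀ x, |h x| ≤ C) →
      ∫ ω, T ω * T' ω * Y ω * h (X ω) ∂P = ∫ ω, T ω * T' ω * ν (X ω) * h (X ω) ∂P)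
    (hT : MemLp T ∞ P) (hT' : MemLp T' ∞ P) (hY : MemLp Y ∞ P) (hX : Measurable X)
    (hρm : Measurable ρ) (hM : 0 < M) (hρ : ∀ᵐ ω ∂P, 1 / M ≤ ρ (X ω))
    (hρhm : Measurable ρh) (hK : 0 < K) (hρh : ∀ᵐ ω ∂P, 1 / K ≤ ρh (X ω))
    (hνm : Measurable ν) (hν : MemLp (fun ω => ν (X ω)) ∞ P)
    (hνhm : Measurable νh) (hνh : MemLp (fun ω => νh (X ω)) ∞ P)
    (hg : Measurable g) (hgX : MemLp (fun ω => g (X ω)) ∞ P) :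
    ∫ ω, T ω * ((1 - T' ω / ρ (X ω)) * (νh (X ω) - ν (X ω))
      + (T' ω / ρh (X ω) - T' ω / ρ (X ω)) * (Y ω - ν (X ω))) * g (X ω) ∂P = 0 := by
  have hρinv := memLp_top_inv_of_one_div_le (f := fun ω => ρ (X ω)) (hρm.comp hX) hM hρ
  have hρhinv := memLp_top_inv_of_one_div_le (f := fun ω => ρh (X ω)) (hρhm.comp hX) hK hρh
  have hweight : MemLp (fun ω => T ω * (1 - T' ω / ρ (X ω))) ∞ P := by
    simpa only [div_eq_mul_inv, Pi.sub_def] using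
      ((memLp_const 1).sub (hρinv.mul' hT' (r := ∞))).mul' hT (r := ∞)
  have hTT' : MemLp (fun ω => T ω * T' ω) ∞ P := hT'.mul' hT
  have hresid : MemLp (fun ω => T ω * T' ω * (Y ω - ν (X ω))) ∞ P := (hY.sub hν).mul' hTT'
  have hg1 : MemLp (fun ω => (νh (X ω) - ν (X ω)) * g (X ω)) ∞ P := hgX.mul' (hνh.sub hν)
  have hg3 : MemLp (fun ω => ((ρh (X ω))⁻¹ - (ρ (X ω))⁻¹) * g (X ω)) ∞ P :=
    hgX.mul' (hρhinv.sub hρinv)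
  calc _ = ∫ ω, T ω * (1 - T' ω / ρ (X ω)) * ((νh (X ω) - ν (X ω)) * g (X ω))
        + T ω * T' ω * (Y ω - ν (X ω)) * (((ρh (X ω))⁻¹ - (ρ (X ω))⁻¹) * g (X ω)) ∂P := by
        congr 1 with ω
        ring
    _ = 0 := by
      rw [integral_add ((hg1.mul' hweight).integrable le_top) ((hg3.mul' hresid).integrable le_top),
        integral_mul_one_sub_div_comp_mul_eq_zero (g := fun x => (νh x - ν x) * g x) hmomρ hT hT'
          hX hρm hM hρ (by fun_prop) hg1,
        integral_mul_sub_comp_mul_eq_zero (g := fun x => ((ρh x)⁻¹ - (ρ x)⁻¹) * g x) hmomν hTT' hY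
          hν (by fun_prop) hg3, add_zero]

end

theorem dte_first_order_error_orthogonal_general
    {Ω : Type*} [MeasurableSpace Ω]
    (P : Measure Ω) [IsProbabilityMeasure P]
    (d₁ d₂ : ℕ)
    (S1 : Ω → (Fin d₁ → ℝ)) (hS1 : Measurable S1)
    (S2 : Ω → (Fin d₂ → ℝ)) (hS2 : Measurable S2)
    (T1 T2 : Ω → ℝ) (hT1 : Measurable T1) (hT2 : Measurable T2)
    (hT1_01 : ∀ ω, T1 ω = 0 ∨ T1 ω = 1) (hT2_01 : ∀ ω, T2 ω = 0 ∨ T2 ω = 1)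
    (Y11 : Ω → ℝ) (hY11m : Measurable Y11) (hY11b : ∃ C, ∀ ω, |Y11 ω| ≤ C)
    (M : ℝ) (hM : 0 < M)
    (π0 : (Fin d₁ → ℝ) → ℝ) (ρ0 ν0 : (Fin d₁ → ℝ) × (Fin d₂ → ℝ) → ℝ)
    (hρ0m : Measurable ρ0) (hν0m : Measurable ν0)
    (hν0b : ∃ C, ∀ x, |ν0 x| ≤ C)
    (hρ0mom : ∀ h : (Fin d₁ → ℝ) × (Fin d₂ → ℝ) → ℝ, Measurable h → (∃ C, ∀ x, |h x| ≤ C) →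
      ∫ ω, T1 ω * T2 ω * h (S1 ω, S2 ω) ∂P = ∫ ω, T1 ω * ρ0 (S1 ω, S2 ω) * h (S1 ω, S2 ω) ∂P)
    (hν0mom : ∀ h : (Fin d₁ → ℝ) × (Fin d₂ → ℝ) → ℝ, Measurable h → (∃ C, ∀ x, |h x| ≤ C) →
      ∫ ω, T1 ω * T2 ω * Y11 ω * h (S1 ω, S2 ω) ∂P
        = ∫ ω, T1 ω * T2 ω * ν0 (S1 ω, S2 ω) * h (S1 ω, S2 ω) ∂P)
    (hpos : ∀ᵐ ω ∂P, 1 / M ≤ π0 (S1 ω) ∧ 1 / M ≤ ρ0 (S1 ω, S2 ω))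
    (K : ℝ) (hK : 0 < K)
    (ρh νh : (Fin d₁ → ℝ) × (Fin d₂ → ℝ) → ℝ)
    (hρhm : Measurable ρh) (hνhm : Measurable νh)
    (hνhb : ∃ C, ∀ x, |νh x| ≤ C)
    (hρhK : ∀ x, 1 / K ≤ ρh x)
    (Δ1 : Ω → ℝ)
    (hΔ1 : ∀ ω, Δ1 ω =
      (1 - T2 ω / ρ0 (S1 ω, S2 ω)) * (νh (S1 ω, S2 ω) - ν0 (S1 ω, S2 ω))
      + (T2 ω / ρh (S1 ω, S2 ω) - T2 ω / ρ0 (S1 ω, S2 ω)) * (Y11 ω - ν0 (S1 ω, S2 ω))) :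
    ∀ h : (Fin d₁ → ℝ) → ℝ, Measurable h → (∃ C, ∀ x, |h x| ≤ C) →
      ∫ ω, T1 ω * Δ1 ω * h (S1 ω) ∂P = 0 := by
  intro h hh hhb
  have hX : Measurable fun ω => (S1 ω, S2 ω) := hS1.prodMk hS2
  have hhfst : Measurable fun x : (Fin d₁ → ℝ) × (Fin d₂ → ℝ) => h x.1 := hh.comp measurable_fst
  simp only [hΔ1]
  exact integral_mul_first_order_error_mul_eq_zero hρ0mom hν0mom
    (memLp_top_of_forall_eq_zero_or_eq_one hT1 hT1_01)
    (memLp_top_of_forall_eq_zero_or_eq_one hT2 hT2_01) (memLp_top_of_abs_le hY11m hY11b) hX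
    hρ0m hM (hpos.mono fun _ hω => hω.2) hρhm hK (.of_forall fun _ => hρhK _)
    hν0m (memLp_top_comp_of_abs_le hν0m hν0b hX) hνhm (memLp_top_comp_of_abs_le hνhm hνhb hX)
    hhfst (memLp_top_comp_of_abs_le hhfst (hhb.imp fun _ hC x => hC x.1) hX)

/-- In the dynamic treatment setup with fixed second-exposure estimates, the
first-order error term `Δ₁` of the doubly robust pseudo-outcome satisfies
`E[T₁ · Δ₁ · h(S₁)] = 0` for every bounded measurable `h`. -/
theorem dte_first_order_error_orthogonal
    {Ω : Type*} [MeasurableSpace Ω] [StandardBorelSpace Ω] [Nonempty Ω]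
    (P : Measure Ω) [IsProbabilityMeasure P]
    (d₁ d₂ : ℕ)
    (S1 : Ω → (Fin d₁ → ℝ)) (hS1 : Measurable S1)
    (S2 : Ω → (Fin d₂ → ℝ)) (hS2 : Measurable S2)
    (T1 T2 : Ω → ℝ) (hT1 : Measurable T1) (hT2 : Measurable T2)
    (hT1_01 : ∀ ω, T1 ω = 0 ∨ T1 ω = 1) (hT2_01 : ∀ ω, T2 ω = 0 ∨ T2 ω = 1)
    (Y11 : Ω → ℝ) (hY11m : Measurable Y11) (hY11b : ∃ C, ∀ ω, |Y11 ω| ≤ C)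
    (Y : Ω → ℝ) (hYm : Measurable Y)
    (hcons : ∀ ω, T1 ω * T2 ω * Y ω = T1 ω * T2 ω * Y11 ω)
    (M : ℝ) (hM : 0 < M)
    (π0 : (Fin d₁ → ℝ) → ℝ) (ρ0 ν0 : (Fin d₁ → ℝ) × (Fin d₂ → ℝ) → ℝ)
    (μ0 : (Fin d₁ → ℝ) → ℝ)
    (hπ0m : Measurable π0) (hρ0m : Measurable ρ0) (hν0m : Measurable ν0) (hμ0m : Measurable μ0)
    (hπ0b : ∃ C, ∀ x, |π0 x| ≤ C) (hρ0b : ∃ C, ∀ x, |ρ0 x| ≤ C)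
    (hν0b : ∃ C, ∀ x, |ν0 x| ≤ C) (hμ0b : ∃ C, ∀ x, |μ0 x| ≤ C)
    (hπ0mom : ∀ h : (Fin d₁ → ℝ) → ℝ, Measurable h → (∃ C, ∀ x, |h x| ≤ C) →
      ∫ ω, T1 ω * h (S1 ω) ∂P = ∫ ω, π0 (S1 ω) * h (S1 ω) ∂P)
    (hρ0mom : ∀ h : (Fin d₁ → ℝ) × (Fin d₂ → ℝ) → ℝ, Measurable h → (∃ C, ∀ x, |h x| ≤ C) →
      ∫ ω, T1 ω * T2 ω * h (S1 ω, S2 ω) ∂P = ∫ ω, T1 ω * ρ0 (S1 ω, S2 ω) * h (S1 ω, S2 ω) ∂P)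
    (hν0mom : ∀ h : (Fin d₁ → ℝ) × (Fin d₂ → ℝ) → ℝ, Measurable h → (∃ C, ∀ x, |h x| ≤ C) →
      ∫ ω, T1 ω * T2 ω * Y11 ω * h (S1 ω, S2 ω) ∂P
        = ∫ ω, T1 ω * T2 ω * ν0 (S1 ω, S2 ω) * h (S1 ω, S2 ω) ∂P)
    (hμ0mom : ∀ h : (Fin d₁ → ℝ) → ℝ, Measurable h → (∃ C, ∀ x, |h x| ≤ C) →
      ∫ ω, T1 ω * Y11 ω * h (S1 ω) ∂P = ∫ ω, T1 ω * μ0 (S1 ω) * h (S1 ω) ∂P)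
    (hpos : ∀ᵐ ω ∂P, 1 / M ≤ π0 (S1 ω) ∧ 1 / M ≤ ρ0 (S1 ω, S2 ω))
    (hign1 : CondIndepFun (MeasurableSpace.comap S1 inferInstance) hS1.comap_le Y11 T1 P)
    (hign2 : CondIndepFun
      (MeasurableSpace.comap (fun ω => (S1 ω, S2 ω)) inferInstance)
      (Measurable.comap_le (hS1.prodMk hS2))
      Y11 T2 (P[|{ω | T1 ω = 1}]))
    (K : ℝ) (hK : 0 < K)
    (ρh νh : (Fin d₁ → ℝ) × (Fin d₂ → ℝ) → ℝ)
    (hρhm : Measurable ρh) (hνhm : Measurable νh)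
    (hρhb : ∃ C, ∀ x, |ρh x| ≤ C) (hνhb : ∃ C, ∀ x, |νh x| ≤ C)
    (hρhK : ∀ x, 1 / K ≤ ρh x)
    (Δ1 : Ω → ℝ)
    (hΔ1 : ∀ ω, Δ1 ω =
      (1 - T2 ω / ρ0 (S1 ω, S2 ω)) * (νh (S1 ω, S2 ω) - ν0 (S1 ω, S2 ω))
      + (T2 ω / ρh (S1 ω, S2 ω) - T2 ω / ρ0 (S1 ω, S2 ω)) * (Y11 ω - ν0 (S1 ω, S2 ω))) :
    ∀ h : (Fin d₁ → ℝ) → ℝ, Measurable h → (∃ C, ∀ x, |h x| ≤ C) →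
      ∫ ω, T1 ω * Δ1 ω * h (S1 ω) ∂P = 0 :=
  dte_first_order_error_orthogonal_general P d₁ d₂ S1 hS1 S2 hS2 T1 T2 hT1 hT2 hT1_01 hT2_01 Y11
    hY11m hY11b M hM π0 ρ0 ν0 hρ0m hν0m hν0b hρ0mom hν0mom hpos K hK ρh νh hρhm hνhm hνhb hρhK Δ1
    hΔ1
end

section
/- Under the stated conditional average treatment effect setup, the doubly robust score Y^# := μ⁰(1,S) + T·(Y − μ⁰(1,S))/π⁰(S) − μ⁰(0,S) − (1−T)·(Y − μ⁰(0,S))/(1 − π⁰(S)) satisfies E[Y^# · h(S)] = E[(Y(1) − Y(0)) · h(S)] for every bounded measurable h : ℝ^d → ℝ; equivalently, the conditional expectation of Y^# given the σ-algebra generated by S equals the conditional expectation of Y(1) − Y(0) given that σ-algebra, almost surely (the doubly robust identification of the conditional average treatment effect). -/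
/-!
Write `m` for the σ-algebra generated by `S`, `π = π⁰(S)` and `μ₁ = μ⁰(1,S)`. Since `T Y = T Y(1)`,
the treated arm `μ₁ + T (Y - μ₁) / π` of the score has conditional mean
`μ₁ + (E[T Y(1) | m] - E[T | m] μ₁) / π`, and ignorability gives
`E[T Y(1) | m] = E[T | m] E[Y(1) | m] = π E[Y(1) | m]`, so this mean is `E[Y(1) | m]`.
The control arm is the same with `1 - T` and `1 - π`.

Conditional independence of `W` and `T` given `m` is a product rule for indicators of `W` and
of `T`. It extends to `E[1{T ∈ t} W | m] = P(T ∈ t | m) E[W | m]` because the laws of `W` under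
`P` restricted to `{T ∈ t} ∩ B` and under `P` on `B` with density `P(T ∈ t | m)` agree on every
set `{W ∈ s}`.
-/

open MeasureTheory ProbabilityTheory

namespace ProbabilityTheory

variable {Ω : Type*} {m mΩ : MeasurableSpace Ω} {P : Measure Ω}

lemma condExp_indicator_nonneg (s : Set Ω) : 0 ≤ᵐ[P] P⟦s|m⟧ :=
  condExp_nonneg (ae_of_all _ fun ω => by by_cases hω : ω ∈ s <;> simp [hω])

lemma norm_condExp_indicator_le_one (s : Set Ω) : ∀ᵐ ω ∂P, ‖(P⟦s|m⟧) ω‖ ≤ 1 := by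
  simpa using ae_bdd_abs_condExp_of_ae_bdd_abs (μ := P) (m := m) (R := (1 : ℝ))
    (f := s.indicator fun _ => (1 : ℝ)) (ae_of_all _ fun ω => by by_cases hω : ω ∈ s <;> simp [hω])

lemma ae_norm_div_le {Z e : Ω → ℝ} {C c : ℝ} (hZC : ∀ᵐ ω ∂P, ‖Z ω‖ ≤ C) (hc : 0 < c)
    (hce : ∀ᵐ ω ∂P, c ≤ e ω) : ∀ᵐ ω ∂P, ‖Z ω / e ω‖ ≤ C / c := by
  filter_upwards [hZC, hce] with ω hZω hcω
  rw [norm_div, Real.norm_of_nonneg (hc.le.trans hcω)]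
  exact div_le_div₀ ((norm_nonneg _).trans hZω) hZω hc hcω

/-- One arm of the doubly robust score: for `A = {T = 1}`, `e = π⁰ ∘ S`, `V = μ⁰(1, ·) ∘ S` this is
`μ⁰(1,S) + T (Y - μ⁰(1,S)) / π⁰(S)`. -/
noncomputable def aipwScore (A : Set Ω) (e V Y : Ω → ℝ) (ω : Ω) : ℝ :=
  V ω + A.indicator (fun _ => (1 : ℝ)) ω * (Y ω - V ω) / e ω

lemma aipwScore_mul_ae_eq {A : Set Ω} {e V Y W Z : Ω → ℝ} (he : ∀ᵐ ω ∂P, e ω ≠ 0)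
    (hY : ∀ ω ∈ A, Y ω = W ω) :
    (fun ω => aipwScore A e V Y ω * Z ω) =ᵐ[P]
      fun ω => Z ω * V ω + Z ω / e ω * A.indicator W ω - Z ω / e ω * A.indicator V ω := by
  filter_upwards [he] with ω heω
  by_cases hω : ω ∈ A
  · simp only [aipwScore, Set.indicator_of_mem hω, hY ω hω]
    field_simp
    ring
  · simp [aipwScore, Set.indicator_of_notMem hω, mul_comm]

lemma integrable_aipwScore_mul {A : Set Ω} (hA : MeasurableSet A) {e V Y W Z : Ω → ℝ}
    (he : AEMeasurable e P) {c : ℝ} (hc : 0 < c) (hce : ∀ᵐ ω ∂P, c ≤ e ω)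
    (hVi : Integrable V P) (hWi : Integrable W P) (hY : ∀ ω ∈ A, Y ω = W ω)
    (hZ : AEMeasurable Z P) {C : ℝ} (hZC : ∀ᵐ ω ∂P, ‖Z ω‖ ≤ C) :
    Integrable (fun ω => aipwScore A e V Y ω * Z ω) P := by
  have hQ : AEStronglyMeasurable (fun ω => Z ω / e ω) P := (hZ.div he).aestronglyMeasurable
  have hQC := ae_norm_div_le hZC hc hce
  refine Integrable.congr ?_ (aipwScore_mul_ae_eq
    (hce.mono fun ω hω => (hc.trans_le hω).ne') hY).symm
  exact ((hVi.bdd_mul hZ.aestronglyMeasurable hZC).add ((hWi.indicator hA).bdd_mul hQ hQC)).sub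
    ((hVi.indicator hA).bdd_mul hQ hQC)

section IsFiniteMeasure

variable [IsFiniteMeasure P]

lemma setIntegral_mul_condExp (hm : m ≤ mΩ) {Z f : Ω → ℝ} (hZ : StronglyMeasurable[m] Z) {C : ℝ}
    (hZC : ∀ᵐ ω ∂P, ‖Z ω‖ ≤ C) (hf : Integrable f P) {B : Set Ω} (hB : MeasurableSet[m] B) :
    ∫ ω in B, Z ω * (P[f|m]) ω ∂P = ∫ ω in B, Z ω * f ω ∂P := by
  rw [← setIntegral_condExp hm (hf.bdd_mul (hZ.mono hm).aestronglyMeasurable hZC) hB]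
  exact setIntegral_congr_ae (hm B hB)
    ((condExp_stronglyMeasurable_mul_of_bound hm hZ hf C hZC).mono fun ω hω _ => hω.symm)

lemma condExp_indicator_compl (hm : m ≤ mΩ) {s : Set Ω} (hs : MeasurableSet s) :
    P⟦sᶜ|m⟧ =ᵐ[P] fun ω => 1 - (P⟦s|m⟧) ω := by
  have hsub := condExp_sub (μ := P) (m := m) (integrable_const (1 : ℝ))
    ((integrable_const (1 : ℝ)).indicator hs)
  rw [condExp_const hm] at hsub
  refine (condExp_congr_ae (ae_of_all _ fun ω => ?_)).trans hsub
  by_cases hω : ω ∈ s <;> simp [hω]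

lemma integral_mul_condExp (hm : m ≤ mΩ) {Z f : Ω → ℝ} (hZ : StronglyMeasurable[m] Z) {C : ℝ}
    (hZC : ∀ᵐ ω ∂P, ‖Z ω‖ ≤ C) (hf : Integrable f P) :
    ∫ ω, Z ω * (P[f|m]) ω ∂P = ∫ ω, Z ω * f ω ∂P := by
  simpa using setIntegral_mul_condExp hm hZ hZC hf MeasurableSet.univ

section CondIndepFun

variable {β : Type*} [StandardBorelSpace Ω] {mβ : MeasurableSpace β} {hm : m ≤ mΩ}
  {W : Ω → ℝ} {T : Ω → β} {t : Set β}

lemma CondIndepFun.map_restrict_inter_preimage (hWT : CondIndepFun m hm W T P)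
    (hW : Measurable W) (hT : Measurable T) (ht : MeasurableSet t) {B : Set Ω}
    (hB : MeasurableSet[m] B) :
    (P.restrict (T ⁻¹' t ∩ B)).map W
      = ((P.restrict B).withDensity fun ω => ENNReal.ofReal ((P⟦T ⁻¹' t|m⟧) ω)).map W := by
  ext s hs
  have hWs : MeasurableSet (W ⁻¹' s) := hW hs
  rw [Measure.map_apply hW hs, Measure.map_apply hW hs, Measure.restrict_apply hWs,
    withDensity_apply _ hWs, Measure.restrict_restrict hWs, ← ofReal_measureReal,
    ← ofReal_integral_eq_lintegral_ofReal integrable_condExp.restrict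
      (ae_restrict_of_ae (condExp_indicator_nonneg _)), ← Set.inter_assoc]
  congr 1
  have hind := (condIndepFun_iff_condExp_inter_preimage_eq_mul hW hT).mp hWT s t hs ht
  calc P.real (W ⁻¹' s ∩ T ⁻¹' t ∩ B)
      = ∫ ω in B, (P⟦W ⁻¹' s ∩ T ⁻¹' t|m⟧) ω ∂P := by
        rw [setIntegral_condExp hm ((integrable_const 1).indicator (hWs.inter (hT ht))) hB,
          setIntegral_indicator (hWs.inter (hT ht)), setIntegral_const, smul_eq_mul, mul_one,
          Set.inter_comm]
    _ = ∫ ω in B, (P⟦T ⁻¹' t|m⟧) ω * (P⟦W ⁻¹' s|m⟧) ω ∂P :=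
        setIntegral_congr_ae (hm B hB) (hind.mono fun ω hω _ => by rw [hω, mul_comm])
    _ = ∫ ω in B, (P⟦T ⁻¹' t|m⟧) ω * (W ⁻¹' s).indicator (fun _ => (1 : ℝ)) ω ∂P :=
        setIntegral_mul_condExp hm stronglyMeasurable_condExp (norm_condExp_indicator_le_one _)
          ((integrable_const 1).indicator hWs) hB
    _ = ∫ ω in W ⁻¹' s ∩ B, (P⟦T ⁻¹' t|m⟧) ω ∂P := by
        rw [Set.inter_comm, ← setIntegral_indicator hWs]
        congr 1 with ω
        by_cases hω : ω ∈ W ⁻¹' s <;> simp [hω]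

lemma CondIndepFun.setIntegral_indicator_preimage (hWT : CondIndepFun m hm W T P)
    (hW : Measurable W) (hT : Measurable T) (ht : MeasurableSet t) {B : Set Ω}
    (hB : MeasurableSet[m] B) :
    ∫ ω in B, (T ⁻¹' t).indicator W ω ∂P = ∫ ω in B, (P⟦T ⁻¹' t|m⟧) ω * W ω ∂P := by
  have hρ : Measurable (P⟦T ⁻¹' t|m⟧) := (stronglyMeasurable_condExp.mono hm).measurable
  calc ∫ ω in B, (T ⁻¹' t).indicator W ω ∂P
      = ∫ ω in T ⁻¹' t ∩ B, W ω ∂P := by rw [setIntegral_indicator (hT ht), Set.inter_comm]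
    _ = ∫ y, y ∂(P.restrict (T ⁻¹' t ∩ B)).map W :=
        (integral_map hW.aemeasurable aestronglyMeasurable_id).symm
    _ = ∫ y, y ∂((P.restrict B).withDensity fun ω => ENNReal.ofReal ((P⟦T ⁻¹' t|m⟧) ω)).map W := by
        rw [hWT.map_restrict_inter_preimage hW hT ht hB]
    _ = ∫ ω, W ω ∂(P.restrict B).withDensity fun ω => ENNReal.ofReal ((P⟦T ⁻¹' t|m⟧) ω) :=
        integral_map hW.aemeasurable aestronglyMeasurable_id
    _ = ∫ ω in B, (P⟦T ⁻¹' t|m⟧) ω * W ω ∂P := by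
        rw [integral_withDensity_eq_integral_toReal_smul hρ.ennreal_ofReal
          (ae_of_all _ fun _ => ENNReal.ofReal_lt_top)]
        refine setIntegral_congr_ae (hm B hB) ?_
        filter_upwards [condExp_indicator_nonneg (T ⁻¹' t)] with ω hω _
        rw [ENNReal.toReal_ofReal hω, smul_eq_mul]

lemma CondIndepFun.integral_mul_indicator_preimage (hWT : CondIndepFun m hm W T P)
    (hW : Measurable W) (hWi : Integrable W P) (hT : Measurable T) (ht : MeasurableSet t)
    {Z : Ω → ℝ} (hZ : StronglyMeasurable[m] Z) {C : ℝ} (hZC : ∀ᵐ ω ∂P, ‖Z ω‖ ≤ C) :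
    ∫ ω, Z ω * (T ⁻¹' t).indicator W ω ∂P = ∫ ω, Z ω * ((P⟦T ⁻¹' t|m⟧) ω * W ω) ∂P := by
  have hρW : Integrable (fun ω => (P⟦T ⁻¹' t|m⟧) ω * W ω) P :=
    hWi.bdd_mul integrable_condExp.aestronglyMeasurable (norm_condExp_indicator_le_one _)
  have hAW : Integrable ((T ⁻¹' t).indicator W) P := hWi.indicator (hT ht)
  have hce : P[(T ⁻¹' t).indicator W|m] =ᵐ[P] P[fun ω => (P⟦T ⁻¹' t|m⟧) ω * W ω|m] :=
    ae_eq_condExp_of_forall_setIntegral_eq hm hρW (fun _ _ _ => integrable_condExp.integrableOn)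
      (fun B hB _ => by
        rw [setIntegral_condExp hm hAW hB, hWT.setIntegral_indicator_preimage hW hT ht hB])
      stronglyMeasurable_condExp.aestronglyMeasurable
  rw [← integral_mul_condExp hm hZ hZC hAW, ← integral_mul_condExp hm hZ hZC hρW]
  exact integral_congr_ae (hce.mono fun ω hω => congrArg (Z ω * ·) hω)

lemma CondIndepFun.integrable_aipwScore_mul_and_integral_eq (hWT : CondIndepFun m hm W T P)
    (hW : Measurable W) (hWi : Integrable W P) (hT : Measurable T) (ht : MeasurableSet t)
    {e V Y Z : Ω → ℝ} (he : StronglyMeasurable[m] e) (hprop : P⟦T ⁻¹' t|m⟧ =ᵐ[P] e)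
    {c : ℝ} (hc : 0 < c) (hce : ∀ᵐ ω ∂P, c ≤ e ω) (hV : StronglyMeasurable[m] V)
    (hVi : Integrable V P) (hY : ∀ ω ∈ T ⁻¹' t, Y ω = W ω) (hZ : StronglyMeasurable[m] Z)
    {C : ℝ} (hZC : ∀ᵐ ω ∂P, ‖Z ω‖ ≤ C) :
    Integrable (fun ω => aipwScore (T ⁻¹' t) e V Y ω * Z ω) P ∧
      ∫ ω, aipwScore (T ⁻¹' t) e V Y ω * Z ω ∂P = ∫ ω, W ω * Z ω ∂P := by
  refine ⟨integrable_aipwScore_mul (hT ht) (he.mono hm).measurable.aemeasurable hc hce hVi hWi hY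
    (hZ.mono hm).measurable.aemeasurable hZC, ?_⟩
  have he0 : ∀ᵐ ω ∂P, e ω ≠ 0 := hce.mono fun ω hω => (hc.trans_le hω).ne'
  have hQ : StronglyMeasurable[m] fun ω => Z ω / e ω :=
    (hZ.measurable.div he.measurable).stronglyMeasurable
  have hQC := ae_norm_div_le hZC hc hce
  have hweight : ∀ X : Ω → ℝ, Measurable X → Integrable X P → CondIndepFun m hm X T P →
      ∫ ω, Z ω / e ω * (T ⁻¹' t).indicator X ω ∂P = ∫ ω, Z ω * X ω ∂P := by
    intro X hX hXi hXT
    rw [hXT.integral_mul_indicator_preimage hX hXi hT ht hQ hQC]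
    refine integral_congr_ae ?_
    filter_upwards [hprop, he0] with ω hρω heω
    rw [hρω]
    field_simp
  have hQi : ∀ X : Ω → ℝ, Integrable X P →
      Integrable (fun ω => Z ω / e ω * (T ⁻¹' t).indicator X ω) P :=
    fun X hXi => (hXi.indicator (hT ht)).bdd_mul (hQ.mono hm).aestronglyMeasurable hQC
  have hZVi := hVi.bdd_mul (hZ.mono hm).aestronglyMeasurable hZC
  rw [integral_congr_ae (aipwScore_mul_ae_eq he0 hY), integral_sub _ (hQi V hVi),
    integral_add hZVi (hQi W hWi), hweight W hW hWi hWT,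
    hweight V (hV.mono hm).measurable hVi (condIndepFun_of_measurable_left hV.measurable hT)]
  · simp_rw [mul_comm (Z _)]
    ring
  · exact hZVi.add (hQi W hWi)

end CondIndepFun

lemma condExp_comap_ae_eq_comp {E : Type*} {mE : MeasurableSpace E} {S : Ω → E}
    (hS : Measurable S) {X : Ω → ℝ} (hX : Integrable X P) {f : E → ℝ} (hf : Measurable f)
    (hfS : Integrable (fun ω => f (S ω)) P)
    (htest : ∀ k : E → ℝ, Measurable k → (∃ C, ∀ x, |k x| ≤ C) →
      ∫ ω, X ω * k (S ω) ∂P = ∫ ω, f (S ω) * k (S ω) ∂P) :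
    P[X|mE.comap S] =ᵐ[P] fun ω => f (S ω) := by
  have hind : ∀ (Y : Ω → ℝ) {u : Set E}, MeasurableSet u →
      ∫ ω, Y ω * u.indicator (fun _ => (1 : ℝ)) (S ω) ∂P = ∫ ω in S ⁻¹' u, Y ω ∂P := by
    intro Y u hu
    rw [← integral_indicator (hS hu)]
    congr 1 with ω
    by_cases hω : S ω ∈ u <;> simp [hω]
  refine (ae_eq_condExp_of_forall_setIntegral_eq hS.comap_le hX (fun _ _ _ => hfS.integrableOn)
    ?_ (hf.comp (comap_measurable S)).aestronglyMeasurable).symm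
  rintro _ ⟨u, hu, rfl⟩ _
  rw [← hind _ hu, ← hind _ hu, htest _ (measurable_const.indicator hu) ⟨1, fun x => ?_⟩]
  by_cases hx : x ∈ u <;> simp [hx]

lemma condExp_preimage_one_and_zero_ae_eq {E : Type*} {mE : MeasurableSpace E} {S : Ω → E}
    (hS : Measurable S) {T : Ω → ℝ} (hT : Measurable T) (hT01 : ∀ ω, T ω = 0 ∨ T ω = 1)
    {π : E → ℝ} (hπ : Measurable π) (hπS : Integrable (fun ω => π (S ω)) P)
    (hmom : ∀ k : E → ℝ, Measurable k → (∃ C, ∀ x, |k x| ≤ C) →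
      ∫ ω, T ω * k (S ω) ∂P = ∫ ω, π (S ω) * k (S ω) ∂P) :
    P⟦T ⁻¹' {1}|mE.comap S⟧ =ᵐ[P] (fun ω => π (S ω)) ∧
      P⟦T ⁻¹' {0}|mE.comap S⟧ =ᵐ[P] fun ω => 1 - π (S ω) := by
  have hT1 : (T ⁻¹' {1}).indicator (fun _ => (1 : ℝ)) = T :=
    funext fun ω => by rcases hT01 ω with hω | hω <;> simp [hω]
  have hT0 : T ⁻¹' {0} = (T ⁻¹' {1})ᶜ := by ext ω; rcases hT01 ω with hω | hω <;> simp [hω]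
  have hTi : Integrable T P := .of_bound hT.aestronglyMeasurable 1
    (ae_of_all _ fun ω => by rcases hT01 ω with hω | hω <;> simp [hω])
  have hprop1 : P⟦T ⁻¹' {1}|mE.comap S⟧ =ᵐ[P] fun ω => π (S ω) := by
    rw [hT1]
    exact condExp_comap_ae_eq_comp hS hTi hπ hπS hmom
  refine ⟨hprop1, ?_⟩
  filter_upwards [hT0 ▸ condExp_indicator_compl hS.comap_le (hT (measurableSet_singleton 1)),
    hprop1] with ω h1 h2
  rw [h1, h2]

end IsFiniteMeasure

end ProbabilityTheory

theorem cate_doubly_robust_identification_general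
    {Ω : Type*} [MeasurableSpace Ω] [StandardBorelSpace Ω]
    (P : Measure Ω) [IsProbabilityMeasure P]
    (d : ℕ) (S : Ω → (Fin d → ℝ)) (hS : Measurable S)
    (T : Ω → ℝ) (hT : Measurable T) (hT01 : ∀ ω, T ω = 0 ∨ T ω = 1)
    (Y0 Y1 : Ω → ℝ) (hY0 : Measurable Y0) (hY1 : Measurable Y1)
    (hY0b : ∃ C, ∀ ω, |Y0 ω| ≤ C) (hY1b : ∃ C, ∀ ω, |Y1 ω| ≤ C)
    (Y : Ω → ℝ) (hYdef : ∀ ω, Y ω = T ω * Y1 ω + (1 - T ω) * Y0 ω)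
    (M : ℝ) (hM : 0 < M)
    (π0 : (Fin d → ℝ) → ℝ) (hπ0m : Measurable π0) (hπ0b : ∃ C, ∀ x, |π0 x| ≤ C)
    (hπ0mom : ∀ h : (Fin d → ℝ) → ℝ, Measurable h → (∃ C, ∀ x, |h x| ≤ C) →
      ∫ ω, T ω * h (S ω) ∂P = ∫ ω, π0 (S ω) * h (S ω) ∂P)
    (hpos : ∀ᵐ ω ∂P, 1 / M ≤ π0 (S ω) ∧ π0 (S ω) ≤ 1 - 1 / M)
    (μ1 μ0 : (Fin d → ℝ) → ℝ) (hμ1m : Measurable μ1) (hμ0m : Measurable μ0)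
    (hμ1b : ∃ C, ∀ x, |μ1 x| ≤ C) (hμ0b : ∃ C, ∀ x, |μ0 x| ≤ C)
    (hign : CondIndepFun (MeasurableSpace.comap S inferInstance) hS.comap_le
      (fun ω => (Y0 ω, Y1 ω)) T P) :
    ∀ h : (Fin d → ℝ) → ℝ, Measurable h → (∃ C, ∀ x, |h x| ≤ C) →
      ∫ ω, (μ1 (S ω) + T ω * (Y ω - μ1 (S ω)) / π0 (S ω)
          - μ0 (S ω) - (1 - T ω) * (Y ω - μ0 (S ω)) / (1 - π0 (S ω))) * h (S ω) ∂P
        = ∫ ω, (Y1 ω - Y0 ω) * h (S ω) ∂P := by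
  rintro h hh ⟨Ch, hCh⟩
  have hbdd : ∀ {f : Ω → ℝ}, Measurable f → (∃ C, ∀ ω, |f ω| ≤ C) → Integrable f P :=
    fun hf ⟨C, hC⟩ => .of_bound hf.aestronglyMeasurable C (ae_of_all _ hC)
  have hcomp : ∀ {g : (Fin d → ℝ) → ℝ}, Measurable g →
      StronglyMeasurable[MeasurableSpace.comap S inferInstance] fun ω => g (S ω) :=
    fun hg => (hg.comp (comap_measurable S)).stronglyMeasurable
  have hbddS : ∀ {g : (Fin d → ℝ) → ℝ}, Measurable g → (∃ C, ∀ x, |g x| ≤ C) →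
      Integrable (fun ω => g (S ω)) P :=
    fun hg hC => hbdd (hg.comp hS) (hC.imp fun _ hC ω => hC (S ω))
  have hZC : ∀ᵐ ω ∂P, ‖h (S ω)‖ ≤ Ch := ae_of_all _ fun ω => hCh (S ω)
  obtain ⟨hprop1, hprop0⟩ :=
    condExp_preimage_one_and_zero_ae_eq hS hT hT01 hπ0m (hbddS hπ0m hπ0b) hπ0mom
  have hY1T : CondIndepFun _ hS.comap_le Y1 T P := hign.comp measurable_snd measurable_id
  have hY0T : CondIndepFun _ hS.comap_le Y0 T P := hign.comp measurable_fst measurable_id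
  obtain ⟨int1, arm1⟩ := hY1T.integrable_aipwScore_mul_and_integral_eq (Y := Y) hY1
      (hbdd hY1 hY1b) hT (measurableSet_singleton 1) (hcomp hπ0m) hprop1 (one_div_pos.2 hM)
      (hpos.mono fun _ hω => hω.1) (hcomp hμ1m) (hbddS hμ1m hμ1b)
      (fun ω (hω : T ω = 1) => by rw [hYdef, hω]; ring) (hcomp hh) hZC
  obtain ⟨int0, arm0⟩ := hY0T.integrable_aipwScore_mul_and_integral_eq (Y := Y) hY0
      (hbdd hY0 hY0b) hT (measurableSet_singleton 0)
      (hcomp (g := fun x => 1 - π0 x) (measurable_const.sub hπ0m)) hprop0 (one_div_pos.2 hM)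
      (hpos.mono fun _ hω => by linarith [hω.2]) (hcomp hμ0m) (hbddS hμ0m hμ0b)
      (fun ω (hω : T ω = 0) => by rw [hYdef, hω]; ring) (hcomp hh) hZC
  calc _ = ∫ ω, (aipwScore (T ⁻¹' {1}) (fun ω => π0 (S ω)) (fun ω => μ1 (S ω)) Y ω * h (S ω)
        - aipwScore (T ⁻¹' {0}) (fun ω => 1 - π0 (S ω)) (fun ω => μ0 (S ω)) Y ω * h (S ω)) ∂P := by
        congr 1 with ω
        rcases hT01 ω with hω | hω <;> simp [aipwScore, hω] <;> ring
    _ = ∫ ω, Y1 ω * h (S ω) ∂P - ∫ ω, Y0 ω * h (S ω) ∂P := by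
        rw [integral_sub int1 int0, arm1, arm0]
    _ = _ := by
        simp_rw [sub_mul]
        exact (integral_sub ((hbdd hY1 hY1b).mul_bdd (hh.comp hS).aestronglyMeasurable hZC)
          ((hbdd hY0 hY0b).mul_bdd (hh.comp hS).aestronglyMeasurable hZC)).symm

/-- Doubly robust identification of the conditional average treatment effect:
the doubly robust score `Y^#` has the same conditional mean given `S` as `Y(1) - Y(0)`. -/
theorem cate_doubly_robust_identification
    {Ω : Type*} [MeasurableSpace Ω] [StandardBorelSpace Ω] [Nonempty Ω]
    (P : Measure Ω) [IsProbabilityMeasure P]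
    (d : ℕ) (S : Ω → (Fin d → ℝ)) (hS : Measurable S)
    (T : Ω → ℝ) (hT : Measurable T) (hT01 : ∀ ω, T ω = 0 ∨ T ω = 1)
    (Y0 Y1 : Ω → ℝ) (hY0 : Measurable Y0) (hY1 : Measurable Y1)
    (hY0b : ∃ C, ∀ ω, |Y0 ω| ≤ C) (hY1b : ∃ C, ∀ ω, |Y1 ω| ≤ C)
    (Y : Ω → ℝ) (hYdef : ∀ ω, Y ω = T ω * Y1 ω + (1 - T ω) * Y0 ω)
    (M : ℝ) (hM : 0 < M)
    (π0 : (Fin d → ℝ) → ℝ) (hπ0m : Measurable π0) (hπ0b : ∃ C, ∀ x, |π0 x| ≤ C)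
    (hπ0mom : ∀ h : (Fin d → ℝ) → ℝ, Measurable h → (∃ C, ∀ x, |h x| ≤ C) →
      ∫ ω, T ω * h (S ω) ∂P = ∫ ω, π0 (S ω) * h (S ω) ∂P)
    (hpos : ∀ᵐ ω ∂P, 1 / M ≤ π0 (S ω) ∧ π0 (S ω) ≤ 1 - 1 / M)
    (μ1 μ0 : (Fin d → ℝ) → ℝ) (hμ1m : Measurable μ1) (hμ0m : Measurable μ0)
    (hμ1b : ∃ C, ∀ x, |μ1 x| ≤ C) (hμ0b : ∃ C, ∀ x, |μ0 x| ≤ C)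
    (hμ1mom : ∀ h : (Fin d → ℝ) → ℝ, Measurable h → (∃ C, ∀ x, |h x| ≤ C) →
      ∫ ω, T ω * Y ω * h (S ω) ∂P = ∫ ω, T ω * μ1 (S ω) * h (S ω) ∂P)
    (hμ0mom : ∀ h : (Fin d → ℝ) → ℝ, Measurable h → (∃ C, ∀ x, |h x| ≤ C) →
      ∫ ω, (1 - T ω) * Y ω * h (S ω) ∂P = ∫ ω, (1 - T ω) * μ0 (S ω) * h (S ω) ∂P)
    (hign : CondIndepFun (MeasurableSpace.comap S inferInstance) hS.comap_le
      (fun ω => (Y0 ω, Y1 ω)) T P) :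
    ∀ h : (Fin d → ℝ) → ℝ, Measurable h → (∃ C, ∀ x, |h x| ≤ C) →
      ∫ ω, (μ1 (S ω) + T ω * (Y ω - μ1 (S ω)) / π0 (S ω)
          - μ0 (S ω) - (1 - T ω) * (Y ω - μ0 (S ω)) / (1 - π0 (S ω))) * h (S ω) ∂P
        = ∫ ω, (Y1 ω - Y0 ω) * h (S ω) ∂P :=
  cate_doubly_robust_identification_general P d S hS T hT hT01 Y0 Y1 hY0 hY1 hY0b hY1b Y hYdef M hM
    π0 hπ0m hπ0b hπ0mom hpos μ1 μ0 hμ1m hμ0m hμ1b hμ0b hign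
end

section
/- Under the stated dynamic treatment setup, E[T₁ · ν⁰(S̄₂) · h(S₁)] = E[T₁ · μ⁰(S₁) · h(S₁)] for every bounded measurable h : ℝ^{d₁} → ℝ; equivalently, μ⁰(S₁) is a version of the conditional expectation of ν⁰(S̄₂) given σ(S₁) under the conditional probability measure P(· | T₁ = 1). -/
/-!
Work under `Q = P(· | T₁ = 1)` and let `𝓑 = σ(S̄₂)`. The moment conditions for `ρ⁰` and `ν⁰`
say that `ρ⁰(S̄₂) = Q[T₂ | 𝓑]` and `Q[Y(1,1) T₂ | 𝓑] = ν⁰(S̄₂) Q[T₂ | 𝓑]`. Sequential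
ignorability factors the left-hand side as `Q[Y(1,1) | 𝓑] Q[T₂ | 𝓑]`, and positivity of `ρ⁰`
lets us cancel `Q[T₂ | 𝓑]`, so `ν⁰(S̄₂) = Q[Y(1,1) | 𝓑]`. As `h(S₁)` is `𝓑`-measurable, the
tower property gives `E_Q[ν⁰(S̄₂) h(S₁)] = E_Q[Y(1,1) h(S₁)]`; multiplying by `P(T₁ = 1)` and
using the moment condition for `μ⁰` yields the claim.
-/

open MeasureTheory ProbabilityTheory

section CondExp

variable {Ω : Type*} {m mΩ : MeasurableSpace Ω} {μ : Measure Ω} [IsFiniteMeasure μ]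

-- Conditional independence is independence under almost every measure of the conditional kernel.
theorem ProbabilityTheory.CondIndepFun.condExp_mul [StandardBorelSpace Ω] {hm : m ≤ mΩ}
    {X Y : Ω → ℝ} (hXY : CondIndepFun m hm X Y μ) (hX : Measurable X) (hY : Measurable Y)
    (hXi : Integrable X μ) (hYi : Integrable Y μ) (hXYi : Integrable (X * Y) μ) :
    μ[X * Y | m] =ᵐ[μ] μ[X | m] * μ[Y | m] := by
  have hindep : ∀ᵐ ω ∂μ, X ⟂ᵢ[condExpKernel μ m ω] Y := by
    filter_upwards [ae_of_ae_trim hm ((condIndepFun_iff_map_prod_eq_prod_map_map hX hY).1 hXY)]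
      with ω hω
    rw [indepFun_iff_map_prod_eq_prod_map_map hX.aemeasurable hY.aemeasurable]
    simpa [Kernel.prod_apply, Kernel.map_apply _ (hX.prodMk hY), Kernel.map_apply _ hX,
      Kernel.map_apply _ hY] using hω
  filter_upwards [condExp_ae_eq_integral_condExpKernel hm hXYi,
    condExp_ae_eq_integral_condExpKernel hm hXi, condExp_ae_eq_integral_condExpKernel hm hYi,
    hindep] with ω hXYω hXω hYω hω
  rw [Pi.mul_apply, hXYω, hXω, hYω]
  exact hω.integral_fun_mul_eq_mul_integral hX.aestronglyMeasurable hY.aestronglyMeasurable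

theorem ae_eq_condExp_of_condIndepFun_of_condExp_mul_eq [StandardBorelSpace Ω] {hm : m ≤ mΩ}
    {X Y V : Ω → ℝ} (hXY : CondIndepFun m hm X Y μ) (hX : Measurable X) (hY : Measurable Y)
    (hXi : Integrable X μ) (hYi : Integrable Y μ) (hXYi : Integrable (X * Y) μ)
    (hV : StronglyMeasurable[m] V) (hVYi : Integrable (V * Y) μ)
    (hXV : μ[X * Y | m] =ᵐ[μ] μ[V * Y | m]) (hY0 : ∀ᵐ ω ∂μ, μ[Y | m] ω ≠ 0) :
    V =ᵐ[μ] μ[X | m] := by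
  filter_upwards [(hXY.condExp_mul hX hY hXi hYi hXYi).symm.trans
    (hXV.trans (condExp_mul_of_stronglyMeasurable_left hV hVYi hYi)), hY0] with ω hω hω0
  exact (mul_right_cancel₀ hω0 hω).symm

variable {β : Type*} [MeasurableSpace β] {X : Ω → β}

theorem condExp_comap_eq_of_forall_integral_mul_comp_eq (hX : Measurable X) {F G : Ω → ℝ}
    (hF : Integrable F μ) (hG : Integrable G μ)
    (hFG : ∀ h : β → ℝ, Measurable h → (∃ C, ∀ x, |h x| ≤ C) →
      ∫ ω, F ω * h (X ω) ∂μ = ∫ ω, G ω * h (X ω) ∂μ) :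
    μ[F | MeasurableSpace.comap X inferInstance] =ᵐ[μ]
      μ[G | MeasurableSpace.comap X inferInstance] := by
  refine ae_eq_condExp_of_forall_setIntegral_eq hX.comap_le hG
    (fun _ _ _ => integrable_condExp.integrableOn) ?_
    stronglyMeasurable_condExp.aestronglyMeasurable
  rintro _ ⟨B, hB, rfl⟩ -
  have hind (f : Ω → ℝ) :
      ∫ ω, f ω * B.indicator 1 (X ω) ∂μ = ∫ ω in X ⁻¹' B, f ω ∂μ := by
    rw [← integral_indicator (hX hB)]
    congr 1 with ω
    by_cases hω : X ω ∈ B <;> simp [hω]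
  rw [setIntegral_condExp hX.comap_le hF ⟨B, hB, rfl⟩, ← hind, ← hind]
  exact hFG _ (measurable_const.indicator hB)
    ⟨1, fun x => by by_cases hx : x ∈ B <;> simp [hx]⟩

theorem integral_mul_comp_eq_of_ae_eq_condExp_comap (hX : Measurable X) {Y V : Ω → ℝ}
    (hY : Integrable Y μ) (hV : V =ᵐ[μ] μ[Y | MeasurableSpace.comap X inferInstance])
    {k : β → ℝ} (hk : Measurable k) (hkb : ∃ C, ∀ x, |k x| ≤ C) :
    ∫ ω, V ω * k (X ω) ∂μ = ∫ ω, Y ω * k (X ω) ∂μ := by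
  obtain ⟨C, hC⟩ := hkb
  have hYk : Integrable (Y * (k ∘ X)) μ :=
    hY.mul_bdd (hk.comp hX).aestronglyMeasurable (ae_of_all _ fun ω => hC (X ω))
  calc ∫ ω, V ω * k (X ω) ∂μ
      = ∫ ω, μ[Y * (k ∘ X) | MeasurableSpace.comap X inferInstance] ω ∂μ :=
        integral_congr_ae <| (hV.mul .rfl).trans (condExp_mul_of_stronglyMeasurable_right
          (hk.comp (comap_measurable X)).stronglyMeasurable hYk hY).symm
    _ = ∫ ω, Y ω * k (X ω) ∂μ := integral_condExp hX.comap_le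

theorem comp_ae_eq_condExp_comap_of_condIndepFun [StandardBorelSpace Ω] (hX : Measurable X)
    {Y T : Ω → ℝ} {R V : β → ℝ}
    (hYT : CondIndepFun (MeasurableSpace.comap X inferInstance) hX.comap_le Y T μ)
    (hY : Measurable Y) (hT : Measurable T) (hR : Measurable R) (hV : Measurable V)
    (hYb : ∃ C, ∀ ω, |Y ω| ≤ C) (hTb : ∃ C, ∀ ω, |T ω| ≤ C)
    (hRb : ∃ C, ∀ x, |R x| ≤ C) (hVb : ∃ C, ∀ x, |V x| ≤ C)
    (hR0 : ∀ᵐ ω ∂μ, R (X ω) ≠ 0)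
    (hTR : ∀ g : β → ℝ, Measurable g → (∃ C, ∀ x, |g x| ≤ C) →
      ∫ ω, T ω * g (X ω) ∂μ = ∫ ω, R (X ω) * g (X ω) ∂μ)
    (hYV : ∀ g : β → ℝ, Measurable g → (∃ C, ∀ x, |g x| ≤ C) →
      ∫ ω, Y ω * T ω * g (X ω) ∂μ = ∫ ω, V (X ω) * T ω * g (X ω) ∂μ) :
    (fun ω => V (X ω)) =ᵐ[μ] μ[Y | MeasurableSpace.comap X inferInstance] := by
  have hXm : Measurable[MeasurableSpace.comap X inferInstance] X := comap_measurable X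
  have integrable_of_bdd {f : Ω → ℝ} (hf : Measurable f) (hfb : ∃ C, ∀ ω, |f ω| ≤ C) :
      Integrable f μ :=
    .of_bound hf.aestronglyMeasurable hfb.choose (ae_of_all _ hfb.choose_spec)
  obtain ⟨CT, hCT⟩ := hTb
  have hYi := integrable_of_bdd hY hYb
  have hTi := integrable_of_bdd hT ⟨CT, hCT⟩
  have hRXi := integrable_of_bdd (hR.comp hX) (hRb.imp fun C hC ω => hC (X ω))
  have hVXi := integrable_of_bdd (hV.comp hX) (hVb.imp fun C hC ω => hC (X ω))
  have hYTi := hYi.mul_bdd hT.aestronglyMeasurable (ae_of_all _ hCT)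
  have hVTi := hVXi.mul_bdd hT.aestronglyMeasurable (ae_of_all _ hCT)
  have hRX : μ[T | MeasurableSpace.comap X inferInstance] =ᵐ[μ] fun ω => R (X ω) :=
    (condExp_comap_eq_of_forall_integral_mul_comp_eq hX hTi hRXi hTR).trans
      (.of_eq (condExp_of_stronglyMeasurable hX.comap_le (hR.comp hXm).stronglyMeasurable hRXi))
  refine ae_eq_condExp_of_condIndepFun_of_condExp_mul_eq hYT hY hT hYi hTi hYTi
    (hV.comp hXm).stronglyMeasurable hVTi
    (condExp_comap_eq_of_forall_integral_mul_comp_eq hX hYTi hVTi hYV) ?_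
  filter_upwards [hRX, hR0] with ω hω hω0
  rwa [hω]

end CondExp

theorem integral_indicator_one_mul_eq_measureReal_mul_integral_cond {Ω : Type*}
    {mΩ : MeasurableSpace Ω} {μ : Measure Ω} [IsFiniteMeasure μ] {s : Set Ω}
    (hs : MeasurableSet s) (f : Ω → ℝ) :
    ∫ ω, s.indicator 1 ω * f ω ∂μ = μ.real s * ∫ ω, f ω ∂μ[|s] := by
  have hfs : (fun ω => s.indicator 1 ω * f ω) = s.indicator f := by
    ext ω
    by_cases hω : ω ∈ s <;> simp [hω]
  rcases eq_or_ne (μ s) 0 with hμs | hμs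
  · simp [hfs, integral_indicator hs, Measure.restrict_eq_zero.2 hμs, measureReal_def, hμs]
  · rw [hfs, integral_indicator hs, ProbabilityTheory.cond, integral_smul_measure, smul_eq_mul,
      ← mul_assoc, ENNReal.toReal_inv, ← measureReal_def,
      mul_inv_cancel₀ ((measureReal_ne_zero_iff).2 hμs), one_mul]

theorem dte_tower_identification_general
    {Ω : Type*} [MeasurableSpace Ω] [StandardBorelSpace Ω]
    (P : Measure Ω) [IsProbabilityMeasure P]
    (d₁ d₂ : ℕ)
    (S1 : Ω → (Fin d₁ → ℝ)) (hS1 : Measurable S1)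
    (S2 : Ω → (Fin d₂ → ℝ)) (hS2 : Measurable S2)
    (T1 T2 : Ω → ℝ) (hT1 : Measurable T1) (hT2 : Measurable T2)
    (hT1_01 : ∀ ω, T1 ω = 0 ∨ T1 ω = 1) (hT2_01 : ∀ ω, T2 ω = 0 ∨ T2 ω = 1)
    (Y11 : Ω → ℝ) (hY11m : Measurable Y11) (hY11b : ∃ C, ∀ ω, |Y11 ω| ≤ C)
    (M : ℝ) (hM : 0 < M)
    (π0 : (Fin d₁ → ℝ) → ℝ) (ρ0 ν0 : (Fin d₁ → ℝ) × (Fin d₂ → ℝ) → ℝ)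
    (μ0 : (Fin d₁ → ℝ) → ℝ)
    (hρ0m : Measurable ρ0) (hν0m : Measurable ν0)
    (hρ0b : ∃ C, ∀ x, |ρ0 x| ≤ C)
    (hν0b : ∃ C, ∀ x, |ν0 x| ≤ C)
    (hρ0mom : ∀ h : (Fin d₁ → ℝ) × (Fin d₂ → ℝ) → ℝ, Measurable h → (∃ C, ∀ x, |h x| ≤ C) →
      ∫ ω, T1 ω * T2 ω * h (S1 ω, S2 ω) ∂P = ∫ ω, T1 ω * ρ0 (S1 ω, S2 ω) * h (S1 ω, S2 ω) ∂P)
    (hν0mom : ∀ h : (Fin d₁ → ℝ) × (Fin d₂ → ℝ) → ℝ, Measurable h → (∃ C, ∀ x, |h x| ≤ C) →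
      ∫ ω, T1 ω * T2 ω * Y11 ω * h (S1 ω, S2 ω) ∂P
        = ∫ ω, T1 ω * T2 ω * ν0 (S1 ω, S2 ω) * h (S1 ω, S2 ω) ∂P)
    (hμ0mom : ∀ h : (Fin d₁ → ℝ) → ℝ, Measurable h → (∃ C, ∀ x, |h x| ≤ C) →
      ∫ ω, T1 ω * Y11 ω * h (S1 ω) ∂P = ∫ ω, T1 ω * μ0 (S1 ω) * h (S1 ω) ∂P)
    (hpos : ∀ᵐ ω ∂P, 1 / M ≤ π0 (S1 ω) ∧ 1 / M ≤ ρ0 (S1 ω, S2 ω))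
    (hign2 : CondIndepFun
      (MeasurableSpace.comap (fun ω => (S1 ω, S2 ω)) inferInstance)
      (Measurable.comap_le (hS1.prodMk hS2))
      Y11 T2 (P[|{ω | T1 ω = 1}])) :
    ∀ h : (Fin d₁ → ℝ) → ℝ, Measurable h → (∃ C, ∀ x, |h x| ≤ C) →
      ∫ ω, T1 ω * ν0 (S1 ω, S2 ω) * h (S1 ω) ∂P = ∫ ω, T1 ω * μ0 (S1 ω) * h (S1 ω) ∂P := by
  intro h hh hhb
  set s : Set Ω := {ω | T1 ω = 1}
  have hs : MeasurableSet s := hT1 (measurableSet_singleton 1)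
  have hT1s : T1 = s.indicator 1 :=
    funext fun ω => by rcases hT1_01 ω with h0 | h1 <;> simp [s, *]
  rw [← hμ0mom h hh hhb]
  rcases eq_or_ne (P s) 0 with hs0 | hs0
  · simp [hT1s, mul_assoc, integral_indicator_one_mul_eq_measureReal_mul_integral_cond hs,
      measureReal_def, hs0]
  simp only [hT1s, mul_assoc, integral_indicator_one_mul_eq_measureReal_mul_integral_cond hs,
    mul_right_inj' ((measureReal_ne_zero_iff).2 hs0)] at hρ0mom hν0mom ⊢
  have hS : Measurable fun ω => (S1 ω, S2 ω) := hS1.prodMk hS2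
  refine integral_mul_comp_eq_of_ae_eq_condExp_comap hS (k := fun x => h x.1)
    (.of_bound hY11m.aestronglyMeasurable _ (ae_of_all _ hY11b.choose_spec)) ?_
    (hh.comp measurable_fst) (hhb.imp fun C hC x => hC x.1)
  refine comp_ae_eq_condExp_comap_of_condIndepFun hS hign2 hY11m hT2 hρ0m hν0m hY11b
    ⟨1, fun ω => by rcases hT2_01 ω with h0 | h1 <;> simp [*]⟩ hρ0b hν0b ?_ hρ0mom
    (fun g hg hgb => by simpa only [mul_comm, mul_assoc, mul_left_comm] using hν0mom g hg hgb)
  filter_upwards [cond_absolutelyContinuous.ae_le hpos] with ω hω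
  exact (lt_of_lt_of_le (by positivity) hω.2).ne'

/-- Tower property for the dynamic nuisance functions: `μ⁰(S₁)` is the
conditional mean of `ν⁰(S̄₂)` given `S₁` within the group `T₁ = 1`. -/
theorem dte_tower_identification
    {Ω : Type*} [MeasurableSpace Ω] [StandardBorelSpace Ω] [Nonempty Ω]
    (P : Measure Ω) [IsProbabilityMeasure P]
    (d₁ d₂ : ℕ)
    (S1 : Ω → (Fin d₁ → ℝ)) (hS1 : Measurable S1)
    (S2 : Ω → (Fin d₂ → ℝ)) (hS2 : Measurable S2)
    (T1 T2 : Ω → ℝ) (hT1 : Measurable T1) (hT2 : Measurable T2)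
    (hT1_01 : ∀ ω, T1 ω = 0 ∨ T1 ω = 1) (hT2_01 : ∀ ω, T2 ω = 0 ∨ T2 ω = 1)
    (Y11 : Ω → ℝ) (hY11m : Measurable Y11) (hY11b : ∃ C, ∀ ω, |Y11 ω| ≤ C)
    (Y : Ω → ℝ) (hYm : Measurable Y)
    (hcons : ∀ ω, T1 ω * T2 ω * Y ω = T1 ω * T2 ω * Y11 ω)
    (M : ℝ) (hM : 0 < M)
    (π0 : (Fin d₁ → ℝ) → ℝ) (ρ0 ν0 : (Fin d₁ → ℝ) × (Fin d₂ → ℝ) → ℝ)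
    (μ0 : (Fin d₁ → ℝ) → ℝ)
    (hπ0m : Measurable π0) (hρ0m : Measurable ρ0) (hν0m : Measurable ν0) (hμ0m : Measurable μ0)
    (hπ0b : ∃ C, ∀ x, |π0 x| ≤ C) (hρ0b : ∃ C, ∀ x, |ρ0 x| ≤ C)
    (hν0b : ∃ C, ∀ x, |ν0 x| ≤ C) (hμ0b : ∃ C, ∀ x, |μ0 x| ≤ C)
    (hπ0mom : ∀ h : (Fin d₁ → ℝ) → ℝ, Measurable h → (∃ C, ∀ x, |h x| ≤ C) →
      ∫ ω, T1 ω * h (S1 ω) ∂P = ∫ ω, π0 (S1 ω) * h (S1 ω) ∂P)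
    (hρ0mom : ∀ h : (Fin d₁ → ℝ) × (Fin d₂ → ℝ) → ℝ, Measurable h → (∃ C, ∀ x, |h x| ≤ C) →
      ∫ ω, T1 ω * T2 ω * h (S1 ω, S2 ω) ∂P = ∫ ω, T1 ω * ρ0 (S1 ω, S2 ω) * h (S1 ω, S2 ω) ∂P)
    (hν0mom : ∀ h : (Fin d₁ → ℝ) × (Fin d₂ → ℝ) → ℝ, Measurable h → (∃ C, ∀ x, |h x| ≤ C) →
      ∫ ω, T1 ω * T2 ω * Y11 ω * h (S1 ω, S2 ω) ∂P
        = ∫ ω, T1 ω * T2 ω * ν0 (S1 ω, S2 ω) * h (S1 ω, S2 ω) ∂P)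
    (hμ0mom : ∀ h : (Fin d₁ → ℝ) → ℝ, Measurable h → (∃ C, ∀ x, |h x| ≤ C) →
      ∫ ω, T1 ω * Y11 ω * h (S1 ω) ∂P = ∫ ω, T1 ω * μ0 (S1 ω) * h (S1 ω) ∂P)
    (hpos : ∀ᵐ ω ∂P, 1 / M ≤ π0 (S1 ω) ∧ 1 / M ≤ ρ0 (S1 ω, S2 ω))
    (hign1 : CondIndepFun (MeasurableSpace.comap S1 inferInstance) hS1.comap_le Y11 T1 P)
    (hign2 : CondIndepFun
      (MeasurableSpace.comap (fun ω => (S1 ω, S2 ω)) inferInstance)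
      (Measurable.comap_le (hS1.prodMk hS2))
      Y11 T2 (P[|{ω | T1 ω = 1}])) :
    ∀ h : (Fin d₁ → ℝ) → ℝ, Measurable h → (∃ C, ∀ x, |h x| ≤ C) →
      ∫ ω, T1 ω * ν0 (S1 ω, S2 ω) * h (S1 ω) ∂P = ∫ ω, T1 ω * μ0 (S1 ω) * h (S1 ω) ∂P :=
  dte_tower_identification_general P d₁ d₂ S1 hS1 S2 hS2 T1 T2 hT1 hT2 hT1_01 hT2_01 Y11 hY11m hY11b
    M hM π0 ρ0 ν0 μ0 hρ0m hν0m hρ0b hν0b hρ0mom hν0mom hμ0mom hpos hign2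
end

section
/- Under the stated dynamic treatment setup with fixed nuisance estimates π̂, ρ̂, ν̂ (π̂ ≥ 1/K, ρ̂ ≥ 1/K pointwise), the bias term R₂ := E[(T₁/π̂(S₁))·(1 − ρ⁰(S̄₂)/ρ̂(S̄₂))·(ν̂(S̄₂) − ν⁰(S̄₂))] satisfies R₂ = E[ T₁·T₂·(ρ̂(S̄₂) − ρ⁰(S̄₂))·(ν̂(S̄₂) − ν⁰(S̄₂)) / (π̂(S₁)·ρ̂(S̄₂)·ρ⁰(S̄₂)) ] and obeys the Cauchy–Schwarz product bound |R₂| ≤ M·K²·( E[T₁·(ρ̂(S̄₂) − ρ⁰(S̄₂))²] )^{1/2} · ( E[T₁·T₂·(ν̂(S̄₂) − ν⁰(S̄₂))²] )^{1/2}. -/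
/-!
On the event `ρ⁰(S̄₂) ≥ 1/M` the integrand of `R₂` equals `T₁ · g(S̄₂)` with
`g = (ρ̂ − ρ⁰)(ν̂ − ν⁰)/(π̂ ρ̂)` bounded, and the defining property of the propensity `ρ⁰`,
applied to `g/ρ⁰`, turns `E[T₁ g(S̄₂)]` into the inverse-propensity-weighted
`E[T₁ T₂ g(S̄₂)/ρ⁰(S̄₂)]`. In that form all denominators are at least `1/K, 1/K, 1/M`, and
since `T₁² = T₁` the numerator factors as `(T₁ |ρ̂ − ρ⁰|) · (T₁ T₂ |ν̂ − ν⁰|)`, so the bound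
is Cauchy–Schwarz.
-/

open MeasureTheory

section Binary

variable {t : ℝ}

lemma abs_eq_self_of_eq_zero_or_one (ht : t = 0 ∨ t = 1) : |t| = t := by
  rcases ht with rfl | rfl <;> norm_num

lemma mul_self_eq_self_of_eq_zero_or_one (ht : t = 0 ∨ t = 1) : t * t = t := by
  rcases ht with rfl | rfl <;> norm_num

lemma abs_mul_le_abs_of_eq_zero_or_one (ht : t = 0 ∨ t = 1) (y : ℝ) : |t * y| ≤ |y| := by
  rcases ht with rfl | rfl <;> simp

end Binary

lemma exists_abs_sub_le {β : Type*} {f g : β → ℝ} (hf : ∃ C, ∀ x, |f x| ≤ C)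
    (hg : ∃ C, ∀ x, |g x| ≤ C) : ∃ C, ∀ x, |f x - g x| ≤ C := by
  obtain ⟨Cf, hCf⟩ := hf
  obtain ⟨Cg, hCg⟩ := hg
  exact ⟨Cf + Cg, fun x => (abs_sub _ _).trans (add_le_add (hCf x) (hCg x))⟩

lemma abs_div_le_mul_abs_of_one_div_le {x p K : ℝ} (hK : 0 < K) (hp : 1 / K ≤ p) :
    |x / p| ≤ K * |x| := by
  have hp0 : 0 < p := lt_of_lt_of_le (by positivity) hp
  have hpK : 1 ≤ p * K := (div_le_iff₀ hK).mp hp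
  rw [abs_div, abs_of_pos hp0, div_le_iff₀ hp0]
  nlinarith [abs_nonneg x]

lemma abs_div_mul_le_mul_abs_of_one_div_le {x p q K L : ℝ} (hK : 0 < K) (hL : 0 < L)
    (hp : 1 / K ≤ p) (hq : 1 / L ≤ q) : |x / (p * q)| ≤ K * L * |x| := by
  rw [← div_div]
  calc |x / p / q| ≤ L * |x / p| := abs_div_le_mul_abs_of_one_div_le hL hq
    _ ≤ L * (K * |x|) := by gcongr; exact abs_div_le_mul_abs_of_one_div_le hK hp
    _ = K * L * |x| := by ring

lemma abs_mul_mul_mul_div_le {t s x y p q r M K : ℝ} (hM : 0 < M) (hK : 0 < K)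
    (ht : t = 0 ∨ t = 1) (hs : s = 0 ∨ s = 1) (hp : 1 / K ≤ p) (hq : 1 / K ≤ q)
    (hr : 1 / M ≤ r) :
    |t * s * x * y / (p * q * r)| ≤ M * K ^ 2 * ((t * |x|) * (t * (s * |y|))) :=
  calc |t * s * x * y / (p * q * r)| = |t * s * x * y / (p * q) / r| := by rw [div_div]
    _ ≤ M * |t * s * x * y / (p * q)| := abs_div_le_mul_abs_of_one_div_le hM hr
    _ ≤ M * (K * K * |t * s * x * y|) := by
        gcongr; exact abs_div_mul_le_mul_abs_of_one_div_le hK hK hp hq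
    _ = M * K ^ 2 * ((t * |x|) * (t * (s * |y|))) := by
        simp only [abs_mul, abs_eq_self_of_eq_zero_or_one ht, abs_eq_self_of_eq_zero_or_one hs]
        linear_combination (-(M * K ^ 2 * s * |x| * |y|)) * mul_self_eq_self_of_eq_zero_or_one ht

section CauchySchwarz

variable {α : Type*} [MeasurableSpace α] {μ : Measure α}

theorem integral_mul_le_sqrt_mul_sqrt_of_nonneg {f g : α → ℝ} (hf₀ : 0 ≤ᵐ[μ] f)
    (hg₀ : 0 ≤ᵐ[μ] g) (hf : MemLp f 2 μ) (hg : MemLp g 2 μ) :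
    ∫ a, f a * g a ∂μ ≤ √(∫ a, f a ^ 2 ∂μ) * √(∫ a, g a ^ 2 ∂μ) := by
  have h := integral_mul_le_Lp_mul_Lq_of_nonneg Real.HolderConjugate.two_two hf₀ hg₀
    (by rwa [ENNReal.ofReal_ofNat]) (by rwa [ENNReal.ofReal_ofNat])
  simpa only [Real.rpow_two, ← Real.sqrt_eq_rpow] using h

theorem abs_integral_le_mul_sqrt_mul_sqrt {φ f g : α → ℝ} {c : ℝ} (hc : 0 ≤ c)
    (hf₀ : 0 ≤ᵐ[μ] f) (hg₀ : 0 ≤ᵐ[μ] g) (hf : MemLp f 2 μ) (hg : MemLp g 2 μ)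
    (hφ : ∀ᵐ a ∂μ, |φ a| ≤ c * (f a * g a)) :
    |∫ a, φ a ∂μ| ≤ c * √(∫ a, f a ^ 2 ∂μ) * √(∫ a, g a ^ 2 ∂μ) := by
  have hfg : Integrable (fun a => f a * g a) μ := hf.integrable_mul hg
  calc |∫ a, φ a ∂μ| ≤ ∫ a, c * (f a * g a) ∂μ := by
        simpa only [Real.norm_eq_abs] using norm_integral_le_of_norm_le (f := φ)
          (hfg.const_mul c) (by simpa only [Real.norm_eq_abs] using hφ)
    _ = c * ∫ a, f a * g a ∂μ := integral_const_mul c _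
    _ ≤ c * (√(∫ a, f a ^ 2 ∂μ) * √(∫ a, g a ^ 2 ∂μ)) :=
        mul_le_mul_of_nonneg_left (integral_mul_le_sqrt_mul_sqrt_of_nonneg hf₀ hg₀ hf hg) hc
    _ = c * √(∫ a, f a ^ 2 ∂μ) * √(∫ a, g a ^ 2 ∂μ) := (mul_assoc _ _ _).symm

end CauchySchwarz

section Propensity

variable {Ω α : Type*} [MeasurableSpace Ω] [MeasurableSpace α] {P : Measure Ω}
  {X : Ω → α} {T₁ T₂ : Ω → ℝ} {ρ : α → ℝ} {M : ℝ}

theorem integral_mul_eq_integral_mul_mul_div_of_propensity (hM : 0 < M) (hρm : Measurable ρ)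
    (hmom : ∀ h : α → ℝ, Measurable h → (∃ C, ∀ x, |h x| ≤ C) →
      ∫ ω, T₁ ω * T₂ ω * h (X ω) ∂P = ∫ ω, T₁ ω * ρ (X ω) * h (X ω) ∂P)
    (hpos : ∀ᵐ ω ∂P, 1 / M ≤ ρ (X ω)) {g : α → ℝ} (hgm : Measurable g)
    (hgb : ∃ C, ∀ x, |g x| ≤ C) :
    ∫ ω, T₁ ω * g (X ω) ∂P = ∫ ω, T₁ ω * T₂ ω * g (X ω) / ρ (X ω) ∂P := by
  obtain ⟨C, hC⟩ := hgb
  -- `ρ` is bounded below only along `X`, so divide by its truncation at `1 / M` instead.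
  set h : α → ℝ := fun x => g x / max (ρ x) (1 / M)
  have hhm : Measurable h := hgm.div (hρm.max measurable_const)
  have hhb : ∀ x, |h x| ≤ M * C := fun x =>
    (abs_div_le_mul_abs_of_one_div_le hM (le_max_right _ _)).trans
      (mul_le_mul_of_nonneg_left (hC x) hM.le)
  have htrunc : ∀ᵐ ω ∂P, max (ρ (X ω)) (1 / M) = ρ (X ω) :=
    hpos.mono fun ω hω => max_eq_left hω
  calc ∫ ω, T₁ ω * g (X ω) ∂P = ∫ ω, T₁ ω * ρ (X ω) * h (X ω) ∂P := by
        refine integral_congr_ae ?_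
        filter_upwards [hpos, htrunc] with ω hω hmax
        have : ρ (X ω) ≠ 0 := (lt_of_lt_of_le (by positivity) hω).ne'
        simp only [h, hmax]
        field_simp
    _ = ∫ ω, T₁ ω * T₂ ω * h (X ω) ∂P := (hmom h hhm ⟨M * C, hhb⟩).symm
    _ = ∫ ω, T₁ ω * T₂ ω * g (X ω) / ρ (X ω) ∂P := by
        refine integral_congr_ae ?_
        filter_upwards [htrunc] with ω hmax
        simp only [h, hmax]
        ring

theorem integral_div_mul_one_sub_div_mul_eq_of_propensity (hM : 0 < M) {K : ℝ} (hK : 0 < K)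
    {a b e : α → ℝ} (hρm : Measurable ρ) (ham : Measurable a) (hbm : Measurable b)
    (hem : Measurable e) (hbρb : ∃ C, ∀ x, |b x - ρ x| ≤ C) (heb : ∃ C, ∀ x, |e x| ≤ C)
    (hmom : ∀ h : α → ℝ, Measurable h → (∃ C, ∀ x, |h x| ≤ C) →
      ∫ ω, T₁ ω * T₂ ω * h (X ω) ∂P = ∫ ω, T₁ ω * ρ (X ω) * h (X ω) ∂P)
    (hpos : ∀ᵐ ω ∂P, 1 / M ≤ ρ (X ω)) (ha : ∀ x, 1 / K ≤ a x) (hb : ∀ x, 1 / K ≤ b x) :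
    ∫ ω, T₁ ω / a (X ω) * (1 - ρ (X ω) / b (X ω)) * e (X ω) ∂P
      = ∫ ω, T₁ ω * T₂ ω * (b (X ω) - ρ (X ω)) * e (X ω)
          / (a (X ω) * b (X ω) * ρ (X ω)) ∂P := by
  obtain ⟨Cbρ, hCbρ⟩ := hbρb
  obtain ⟨Ce, hCe⟩ := heb
  set g : α → ℝ := fun x => (b x - ρ x) * e x / (a x * b x)
  have hgm : Measurable g := ((hbm.sub hρm).mul hem).div (ham.mul hbm)
  have hgb : ∀ x, |g x| ≤ K * K * (Cbρ * Ce) := fun x => by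
    refine (abs_div_mul_le_mul_abs_of_one_div_le hK hK (ha x) (hb x)).trans ?_
    gcongr
    rw [abs_mul]
    exact mul_le_mul (hCbρ x) (hCe x) (abs_nonneg _) ((abs_nonneg _).trans (hCbρ x))
  have ha₀ : ∀ x, 0 < a x := fun x => lt_of_lt_of_le (by positivity) (ha x)
  have hb₀ : ∀ x, 0 < b x := fun x => lt_of_lt_of_le (by positivity) (hb x)
  calc ∫ ω, T₁ ω / a (X ω) * (1 - ρ (X ω) / b (X ω)) * e (X ω) ∂P
      = ∫ ω, T₁ ω * g (X ω) ∂P := by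
        refine integral_congr_ae (ae_of_all _ fun ω => ?_)
        have := (ha₀ (X ω)).ne'
        have := (hb₀ (X ω)).ne'
        simp only [g]
        field_simp
    _ = ∫ ω, T₁ ω * T₂ ω * g (X ω) / ρ (X ω) ∂P :=
        integral_mul_eq_integral_mul_mul_div_of_propensity hM hρm hmom hpos hgm ⟨_, hgb⟩
    _ = _ := by
        refine integral_congr_ae (ae_of_all _ fun ω => ?_)
        simp only [g]
        ring

end Propensity

theorem abs_integral_mul_div_le_sqrt_mul_sqrt {Ω : Type*} [MeasurableSpace Ω] {P : Measure Ω}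
    {T₁ T₂ u v a b r : Ω → ℝ} {M K : ℝ} (hM : 0 < M) (hK : 0 < K)
    (hT₁ : AEStronglyMeasurable T₁ P) (hT₂ : AEStronglyMeasurable T₂ P)
    (hT₁01 : ∀ ω, T₁ ω = 0 ∨ T₁ ω = 1) (hT₂01 : ∀ ω, T₂ ω = 0 ∨ T₂ ω = 1)
    (hu : MemLp u 2 P) (hv : MemLp v 2 P) (ha : ∀ᵐ ω ∂P, 1 / K ≤ a ω)
    (hb : ∀ᵐ ω ∂P, 1 / K ≤ b ω) (hr : ∀ᵐ ω ∂P, 1 / M ≤ r ω) :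
    |∫ ω, T₁ ω * T₂ ω * u ω * v ω / (a ω * b ω * r ω) ∂P|
      ≤ M * K ^ 2 * √(∫ ω, T₁ ω * u ω ^ 2 ∂P) * √(∫ ω, T₁ ω * T₂ ω * v ω ^ 2 ∂P) := by
  have hT₁0 : ∀ ω, 0 ≤ T₁ ω := fun ω => abs_eq_self_of_eq_zero_or_one (hT₁01 ω) ▸ abs_nonneg _
  have hT₂0 : ∀ ω, 0 ≤ T₂ ω := fun ω => abs_eq_self_of_eq_zero_or_one (hT₂01 ω) ▸ abs_nonneg _
  have hF : MemLp (fun ω => T₁ ω * |u ω|) 2 P :=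
    hu.of_le (hT₁.mul hu.1.norm) (ae_of_all _ fun ω => by
      simpa only [Real.norm_eq_abs, abs_abs] using abs_mul_le_abs_of_eq_zero_or_one (hT₁01 ω) |u ω|)
  have hG : MemLp (fun ω => T₁ ω * (T₂ ω * |v ω|)) 2 P :=
    hv.of_le (hT₁.mul (hT₂.mul hv.1.norm)) (ae_of_all _ fun ω => by
      simpa only [Real.norm_eq_abs, abs_abs] using
        (abs_mul_le_abs_of_eq_zero_or_one (hT₁01 ω) _).trans
          (abs_mul_le_abs_of_eq_zero_or_one (hT₂01 ω) |v ω|))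
  have hbound : ∀ᵐ ω ∂P, |T₁ ω * T₂ ω * u ω * v ω / (a ω * b ω * r ω)|
      ≤ M * K ^ 2 * ((T₁ ω * |u ω|) * (T₁ ω * (T₂ ω * |v ω|))) := by
    filter_upwards [ha, hb, hr] with ω ha hb hr
    exact abs_mul_mul_mul_div_le hM hK (hT₁01 ω) (hT₂01 ω) ha hb hr
  have hF2 : (fun ω => (T₁ ω * |u ω|) ^ 2) = fun ω => T₁ ω * u ω ^ 2 := funext fun ω => by
    rw [mul_pow, sq_abs, sq, mul_self_eq_self_of_eq_zero_or_one (hT₁01 ω)]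
  have hG2 : (fun ω => (T₁ ω * (T₂ ω * |v ω|)) ^ 2) = fun ω => T₁ ω * T₂ ω * v ω ^ 2 :=
    funext fun ω => by
      rw [mul_pow, mul_pow, sq_abs, sq (T₁ ω), sq (T₂ ω),
        mul_self_eq_self_of_eq_zero_or_one (hT₁01 ω), mul_self_eq_self_of_eq_zero_or_one (hT₂01 ω),
        mul_assoc]
  have := abs_integral_le_mul_sqrt_mul_sqrt (by positivity)
    (ae_of_all _ fun ω => mul_nonneg (hT₁0 ω) (abs_nonneg (u ω)))
    (ae_of_all _ fun ω => mul_nonneg (hT₁0 ω) (mul_nonneg (hT₂0 ω) (abs_nonneg (v ω))))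
    hF hG hbound
  rwa [hF2, hG2] at this

theorem dte_second_bias_term_product_bound_general
    {Ω : Type*} [MeasurableSpace Ω]
    (P : Measure Ω) [IsProbabilityMeasure P]
    (d₁ d₂ : ℕ)
    (S1 : Ω → (Fin d₁ → ℝ)) (hS1 : Measurable S1)
    (S2 : Ω → (Fin d₂ → ℝ)) (hS2 : Measurable S2)
    (T1 T2 : Ω → ℝ) (hT1 : Measurable T1) (hT2 : Measurable T2)
    (hT1_01 : ∀ ω, T1 ω = 0 ∨ T1 ω = 1) (hT2_01 : ∀ ω, T2 ω = 0 ∨ T2 ω = 1)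
    (M : ℝ) (hM : 0 < M)
    (ρ0 : (Fin d₁ → ℝ) × (Fin d₂ → ℝ) → ℝ) (hρ0m : Measurable ρ0) (hρ0b : ∃ C, ∀ x, |ρ0 x| ≤ C)
    (hρ0mom : ∀ h : (Fin d₁ → ℝ) × (Fin d₂ → ℝ) → ℝ, Measurable h → (∃ C, ∀ x, |h x| ≤ C) →
      ∫ ω, T1 ω * T2 ω * h (S1 ω, S2 ω) ∂P = ∫ ω, T1 ω * ρ0 (S1 ω, S2 ω) * h (S1 ω, S2 ω) ∂P)
    (hpos : ∀ᵐ ω ∂P, 1 / M ≤ ρ0 (S1 ω, S2 ω))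
    (ν0 : (Fin d₁ → ℝ) × (Fin d₂ → ℝ) → ℝ) (hν0m : Measurable ν0) (hν0b : ∃ C, ∀ x, |ν0 x| ≤ C)
    (K : ℝ) (hK : 0 < K)
    (πh : (Fin d₁ → ℝ) → ℝ) (ρh νh : (Fin d₁ → ℝ) × (Fin d₂ → ℝ) → ℝ)
    (hπhm : Measurable πh) (hρhm : Measurable ρh) (hνhm : Measurable νh)
    (hρhb : ∃ C, ∀ x, |ρh x| ≤ C) (hνhb : ∃ C, ∀ x, |νh x| ≤ C)
    (hπhK : ∀ x, 1 / K ≤ πh x) (hρhK : ∀ x, 1 / K ≤ ρh x) :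
    ((∫ ω, (T1 ω / πh (S1 ω)) * (1 - ρ0 (S1 ω, S2 ω) / ρh (S1 ω, S2 ω))
          * (νh (S1 ω, S2 ω) - ν0 (S1 ω, S2 ω)) ∂P)
        = ∫ ω, T1 ω * T2 ω * (ρh (S1 ω, S2 ω) - ρ0 (S1 ω, S2 ω))
            * (νh (S1 ω, S2 ω) - ν0 (S1 ω, S2 ω))
            / (πh (S1 ω) * ρh (S1 ω, S2 ω) * ρ0 (S1 ω, S2 ω)) ∂P)
      ∧ |∫ ω, (T1 ω / πh (S1 ω)) * (1 - ρ0 (S1 ω, S2 ω) / ρh (S1 ω, S2 ω))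
            * (νh (S1 ω, S2 ω) - ν0 (S1 ω, S2 ω)) ∂P|
          ≤ M * K ^ 2 * Real.sqrt (∫ ω, T1 ω * (ρh (S1 ω, S2 ω) - ρ0 (S1 ω, S2 ω)) ^ 2 ∂P)
              * Real.sqrt (∫ ω, T1 ω * T2 ω * (νh (S1 ω, S2 ω) - ν0 (S1 ω, S2 ω)) ^ 2 ∂P) := by
  obtain ⟨Cρ, hCρ⟩ := exists_abs_sub_le hρhb hρ0b
  obtain ⟨Cν, hCν⟩ := exists_abs_sub_le hνhb hν0b
  have hS : Measurable fun ω => (S1 ω, S2 ω) := hS1.prodMk hS2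
  have hrep := integral_div_mul_one_sub_div_mul_eq_of_propensity (P := P) (T₂ := T2)
    (a := fun x => πh x.1) (e := fun x => νh x - ν0 x) hM hK hρ0m
    (hπhm.comp measurable_fst) hρhm (hνhm.sub hν0m) ⟨Cρ, hCρ⟩ ⟨Cν, hCν⟩
    hρ0mom hpos (fun x => hπhK x.1) hρhK
  have hρL2 : MemLp (fun ω => ρh (S1 ω, S2 ω) - ρ0 (S1 ω, S2 ω)) 2 P :=
    MemLp.of_bound ((hρhm.sub hρ0m).comp hS).aestronglyMeasurable Cρ (ae_of_all _ fun ω => hCρ _)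
  have hνL2 : MemLp (fun ω => νh (S1 ω, S2 ω) - ν0 (S1 ω, S2 ω)) 2 P :=
    MemLp.of_bound ((hνhm.sub hν0m).comp hS).aestronglyMeasurable Cν (ae_of_all _ fun ω => hCν _)
  exact ⟨hrep, hrep ▸ abs_integral_mul_div_le_sqrt_mul_sqrt hM hK hT1.aestronglyMeasurable
    hT2.aestronglyMeasurable hT1_01 hT2_01 hρL2 hνL2 (ae_of_all _ fun ω => hπhK _)
    (ae_of_all _ fun ω => hρhK _) hpos⟩

/-- Representation and Cauchy–Schwarz product bound for the second bias term
`R₂ = E[(T₁/π̂(S₁))·(1 − ρ⁰(S̄₂)/ρ̂(S̄₂))·(ν̂(S̄₂) − ν⁰(S̄₂))]` in the dynamic treatment setup. -/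
theorem dte_second_bias_term_product_bound
    {Ω : Type*} [MeasurableSpace Ω]
    (P : Measure Ω) [IsProbabilityMeasure P]
    (d₁ d₂ : ℕ)
    (S1 : Ω → (Fin d₁ → ℝ)) (hS1 : Measurable S1)
    (S2 : Ω → (Fin d₂ → ℝ)) (hS2 : Measurable S2)
    (T1 T2 : Ω → ℝ) (hT1 : Measurable T1) (hT2 : Measurable T2)
    (hT1_01 : ∀ ω, T1 ω = 0 ∨ T1 ω = 1) (hT2_01 : ∀ ω, T2 ω = 0 ∨ T2 ω = 1)
    (M : ℝ) (hM : 0 < M)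
    (ρ0 : (Fin d₁ → ℝ) × (Fin d₂ → ℝ) → ℝ) (hρ0m : Measurable ρ0) (hρ0b : ∃ C, ∀ x, |ρ0 x| ≤ C)
    (hρ0mom : ∀ h : (Fin d₁ → ℝ) × (Fin d₂ → ℝ) → ℝ, Measurable h → (∃ C, ∀ x, |h x| ≤ C) →
      ∫ ω, T1 ω * T2 ω * h (S1 ω, S2 ω) ∂P = ∫ ω, T1 ω * ρ0 (S1 ω, S2 ω) * h (S1 ω, S2 ω) ∂P)
    (hpos : ∀ᵐ ω ∂P, 1 / M ≤ ρ0 (S1 ω, S2 ω))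
    (ν0 : (Fin d₁ → ℝ) × (Fin d₂ → ℝ) → ℝ) (hν0m : Measurable ν0) (hν0b : ∃ C, ∀ x, |ν0 x| ≤ C)
    (K : ℝ) (hK : 0 < K)
    (πh : (Fin d₁ → ℝ) → ℝ) (ρh νh : (Fin d₁ → ℝ) × (Fin d₂ → ℝ) → ℝ)
    (hπhm : Measurable πh) (hρhm : Measurable ρh) (hνhm : Measurable νh)
    (hπhb : ∃ C, ∀ x, |πh x| ≤ C) (hρhb : ∃ C, ∀ x, |ρh x| ≤ C) (hνhb : ∃ C, ∀ x, |νh x| ≤ C)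
    (hπhK : ∀ x, 1 / K ≤ πh x) (hρhK : ∀ x, 1 / K ≤ ρh x) :
    ((∫ ω, (T1 ω / πh (S1 ω)) * (1 - ρ0 (S1 ω, S2 ω) / ρh (S1 ω, S2 ω))
          * (νh (S1 ω, S2 ω) - ν0 (S1 ω, S2 ω)) ∂P)
        = ∫ ω, T1 ω * T2 ω * (ρh (S1 ω, S2 ω) - ρ0 (S1 ω, S2 ω))
            * (νh (S1 ω, S2 ω) - ν0 (S1 ω, S2 ω))
            / (πh (S1 ω) * ρh (S1 ω, S2 ω) * ρ0 (S1 ω, S2 ω)) ∂P)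
      ∧ |∫ ω, (T1 ω / πh (S1 ω)) * (1 - ρ0 (S1 ω, S2 ω) / ρh (S1 ω, S2 ω))
            * (νh (S1 ω, S2 ω) - ν0 (S1 ω, S2 ω)) ∂P|
          ≤ M * K ^ 2 * Real.sqrt (∫ ω, T1 ω * (ρh (S1 ω, S2 ω) - ρ0 (S1 ω, S2 ω)) ^ 2 ∂P)
              * Real.sqrt (∫ ω, T1 ω * T2 ω * (νh (S1 ω, S2 ω) - ν0 (S1 ω, S2 ω)) ^ 2 ∂P) :=
  dte_second_bias_term_product_bound_general P d₁ d₂ S1 hS1 S2 hS2 T1 T2 hT1 hT2 hT1_01 hT2_01 M hM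
    ρ0 hρ0m hρ0b hρ0mom hpos ν0 hν0m hν0b K hK πh ρh νh hπhm hρhm hνhm hρhb hνhb hπhK hρhK
end

section
/- Under the stated dynamic treatment setup with fixed nuisance estimates π̂, ρ̂, ν̂, μ̂ (π̂ ≥ 1/K, ρ̂ ≥ 1/K pointwise, and ‖ν̂‖_∞, ‖μ̂‖_∞ ≤ B), suppose also |Y| ≤ B, ‖ν⁰‖_∞ ≤ B and ‖μ⁰‖_∞ ≤ B almost surely. Then there exists a constant C depending only on (M, K, B) such that the doubly robust score ψ(Z; η) := μ(S₁) + T₁·(ν(S̄₂) − μ(S₁))/π(S₁) + T₁·T₂·(Y − ν(S̄₂))/(π(S₁)·ρ(S̄₂)) satisfies the second-moment stability bound E[(ψ(Z; η̂) − ψ(Z; η⁰))²] ≤ C·( E[T₁·T₂·(ν̂(S̄₂) − ν⁰(S̄₂))²] + E[T₁·(μ̂(S₁) − μ⁰(S₁))²] + E[(π̂(S₁) − π⁰(S₁))²] + E[T₁·(ρ̂(S̄₂) − ρ⁰(S̄₂))²] ). -/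
/-!
With `a = π̂⁻¹, b = π⁰⁻¹, c = ρ̂⁻¹, d = ρ⁰⁻¹` the score difference splits as
`(μ̂ - μ⁰)(1 - T₁a) + T₁a(ν̂ - ν⁰) + T₁(ν⁰ - μ⁰)(a - b)
  + T₁T₂(Y - ν̂)(ac - bd) + T₁T₂bd(ν⁰ - ν̂)`.
Positivity bounds `a, c` by `K` and `b, d` by `M` and makes inversion Lipschitz,
`|a - b| ≤ KM|π̂ - π⁰|`, so `|ψ(η̂) - ψ(η⁰)|` is at most a fixed linear combination of
`T₁|ν̂ - ν⁰|, |μ̂ - μ⁰|, |π̂ - π⁰|, T₁|ρ̂ - ρ⁰|`, and Cauchy–Schwarz bounds its square.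
Two of the resulting errors are weighted differently from the statement; the balancing identities
for `T₂` and `T₁`, applied to `h = (ν̂ - ν⁰)²` and `h = (μ̂ - μ⁰)²`, together with
`ρ⁰, π⁰ ≥ 1/M`, give `E[T₁(ν̂ - ν⁰)²] ≤ M·E[T₁T₂(ν̂ - ν⁰)²]` and
`E[(μ̂ - μ⁰)²] ≤ M·E[T₁(μ̂ - μ⁰)²]`.
-/

open MeasureTheory Set
open scoped ENNReal

noncomputable def drScore (t₁ t₂ y μ ν π ρ : ℝ) : ℝ :=
  μ + t₁ * (ν - μ) / π + t₁ * t₂ * (y - ν) / (π * ρ)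

-- The squared coefficients of `abs_drScore_sub_le`, as Cauchy–Schwarz requires.
def drScoreConst (B K M : ℝ) : ℝ :=
  (K + M ^ 2) ^ 2 + (1 + K) ^ 2 + (2 * B * K * M * (1 + M)) ^ 2 + (2 * B * K ^ 2 * M) ^ 2

lemma drScoreConst_pos {B K M : ℝ} (hK : 0 < K) : 0 < drScoreConst B K M := by
  unfold drScoreConst; positivity

lemma inv_le_of_one_div_le {K x : ℝ} (hK : 0 < K) (hx : 1 / K ≤ x) : x⁻¹ ≤ K :=
  inv_le_of_inv_le₀ hK (by rwa [← one_div])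

lemma abs_inv_sub_inv_le {K M x y : ℝ} (hK : 0 < K) (hM : 0 < M) (hx : 1 / K ≤ x)
    (hy : 1 / M ≤ y) : |x⁻¹ - y⁻¹| ≤ K * M * |x - y| := by
  have hx₀ : 0 < x := (one_div_pos.2 hK).trans_le hx
  have hy₀ : 0 < y := (one_div_pos.2 hM).trans_le hy
  rw [inv_sub_inv' hx₀.ne' hy₀.ne', abs_mul, abs_mul, abs_inv, abs_inv, abs_of_pos hx₀,
    abs_of_pos hy₀, abs_sub_comm, mul_right_comm]
  gcongr
  · exact inv_le_of_one_div_le hK hx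
  · exact inv_le_of_one_div_le hM hy

lemma abs_inv_mul_inv_sub_inv_mul_inv_le {K M x x' y y' : ℝ} (hK : 0 < K) (hM : 0 < M)
    (hx : 1 / K ≤ x) (hx' : 1 / K ≤ x') (hy : 1 / M ≤ y) (hy' : 1 / M ≤ y') :
    |x⁻¹ * x'⁻¹ - y⁻¹ * y'⁻¹| ≤ K * (K * M * |x' - y'|) + K * M * |x - y| * M := by
  have hx₀ : 0 ≤ x⁻¹ := inv_nonneg.2 ((one_div_pos.2 hK).le.trans hx)
  have hy₀ : 0 ≤ y'⁻¹ := inv_nonneg.2 ((one_div_pos.2 hM).le.trans hy')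
  calc |x⁻¹ * x'⁻¹ - y⁻¹ * y'⁻¹| = |x⁻¹ * (x'⁻¹ - y'⁻¹) + (x⁻¹ - y⁻¹) * y'⁻¹| := by ring_nf
    _ ≤ |x⁻¹ * (x'⁻¹ - y'⁻¹)| + |(x⁻¹ - y⁻¹) * y'⁻¹| := abs_add_le _ _
    _ = x⁻¹ * |x'⁻¹ - y'⁻¹| + |x⁻¹ - y⁻¹| * y'⁻¹ := by
      rw [abs_mul, abs_mul, abs_of_nonneg hx₀, abs_of_nonneg hy₀]
    _ ≤ _ := by
      gcongr
      · exact inv_le_of_one_div_le hK hx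
      · exact abs_inv_sub_inv_le hK hM hx' hy'
      · exact abs_inv_sub_inv_le hK hM hx hy
      · exact inv_le_of_one_div_le hM hy'

lemma sq_add_four_le_mul (a₁ a₂ a₃ a₄ x₁ x₂ x₃ x₄ : ℝ) :
    (a₁ * x₁ + a₂ * x₂ + a₃ * x₃ + a₄ * x₄) ^ 2
      ≤ (a₁ ^ 2 + a₂ ^ 2 + a₃ ^ 2 + a₄ ^ 2) * (x₁ ^ 2 + x₂ ^ 2 + x₃ ^ 2 + x₄ ^ 2) := by
  simpa [Fin.sum_univ_four, add_assoc] using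
    Finset.sum_mul_sq_le_sq_mul_sq Finset.univ ![a₁, a₂, a₃, a₄] ![x₁, x₂, x₃, x₄]

lemma drScore_sub_eq (t₁ t₂ y μ' ν' π' ρ' μ ν π ρ : ℝ) :
    drScore t₁ t₂ y μ' ν' π' ρ' - drScore t₁ t₂ y μ ν π ρ
      = (μ' - μ) * (1 - t₁ * π'⁻¹) + t₁ * π'⁻¹ * (ν' - ν) + t₁ * (ν - μ) * (π'⁻¹ - π⁻¹)
        + t₁ * t₂ * (y - ν') * (π'⁻¹ * ρ'⁻¹ - π⁻¹ * ρ⁻¹) + t₁ * t₂ * (π⁻¹ * ρ⁻¹) * (ν - ν') := by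
  simp only [drScore, div_eq_mul_inv, mul_inv]
  ring

lemma abs_drScore_sub_le {t₁ t₂ y μ' ν' π' ρ' μ ν π ρ B K M : ℝ} (hK : 0 < K) (hM : 0 < M)
    (ht₁ : t₁ ∈ Icc (0 : ℝ) 1) (ht₂ : t₂ ∈ Icc (0 : ℝ) 1) (hy : |y| ≤ B)
    (hν' : |ν'| ≤ B) (hμ : |μ| ≤ B) (hν : |ν| ≤ B)
    (hπ' : 1 / K ≤ π') (hρ' : 1 / K ≤ ρ') (hπ : 1 / M ≤ π) (hρ : 1 / M ≤ ρ) :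
    |drScore t₁ t₂ y μ' ν' π' ρ' - drScore t₁ t₂ y μ ν π ρ|
      ≤ (K + M ^ 2) * (t₁ * |ν' - ν|) + (1 + K) * |μ' - μ|
        + 2 * B * K * M * (1 + M) * |π' - π| + 2 * B * K ^ 2 * M * (t₁ * |ρ' - ρ|) := by
  obtain ⟨ht₁₀, ht₁₁⟩ := ht₁
  obtain ⟨ht₂₀, ht₂₁⟩ := ht₂
  have ha₀ : 0 ≤ π'⁻¹ := inv_nonneg.2 ((one_div_pos.2 hK).le.trans hπ')
  have hb₀ : 0 ≤ π⁻¹ := inv_nonneg.2 ((one_div_pos.2 hM).le.trans hπ)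
  have hd₀ : 0 ≤ ρ⁻¹ := inv_nonneg.2 ((one_div_pos.2 hM).le.trans hρ)
  have ha := inv_le_of_one_div_le hK hπ'
  have hb := inv_le_of_one_div_le hM hπ
  have hd := inv_le_of_one_div_le hM hρ
  have hab := abs_inv_sub_inv_le hK hM hπ' hπ
  have hprod := abs_inv_mul_inv_sub_inv_mul_inv_le hK hM hπ' hρ' hπ hρ
  have hB : 0 ≤ B := (abs_nonneg y).trans hy
  have hyν : |y - ν'| ≤ 2 * B := by linarith [abs_sub y ν']
  have hνμ : |ν - μ| ≤ 2 * B := by linarith [abs_sub ν μ]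
  rw [drScore_sub_eq]
  have h₁ : |(μ' - μ) * (1 - t₁ * π'⁻¹)| ≤ (1 + K) * |μ' - μ| := by
    rw [abs_mul, mul_comm]
    gcongr
    exact abs_le.2 ⟨by nlinarith, by nlinarith⟩
  have h₂ : |t₁ * π'⁻¹ * (ν' - ν)| ≤ K * (t₁ * |ν' - ν|) := by
    rw [abs_mul, abs_mul, abs_of_nonneg ht₁₀, abs_of_nonneg ha₀]
    nlinarith [abs_nonneg (ν' - ν), mul_nonneg ht₁₀ (abs_nonneg (ν' - ν))]
  have h₃ : |t₁ * (ν - μ) * (π'⁻¹ - π⁻¹)| ≤ 2 * B * (K * M * |π' - π|) := by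
    rw [abs_mul, abs_mul, abs_of_nonneg ht₁₀]
    calc t₁ * |ν - μ| * |π'⁻¹ - π⁻¹| ≤ 1 * (2 * B) * (K * M * |π' - π|) := by gcongr
      _ = _ := by ring
  have h₄ : |t₁ * t₂ * (y - ν') * (π'⁻¹ * ρ'⁻¹ - π⁻¹ * ρ⁻¹)|
      ≤ t₁ * (2 * B * (K * (K * M * |ρ' - ρ|) + K * M * |π' - π| * M)) := by
    rw [abs_mul, abs_mul, abs_mul, abs_of_nonneg ht₁₀, abs_of_nonneg ht₂₀]
    calc t₁ * t₂ * |y - ν'| * |π'⁻¹ * ρ'⁻¹ - π⁻¹ * ρ⁻¹|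
        ≤ t₁ * 1 * (2 * B) * (K * (K * M * |ρ' - ρ|) + K * M * |π' - π| * M) := by gcongr
      _ = _ := by ring
  have h₅ : |t₁ * t₂ * (π⁻¹ * ρ⁻¹) * (ν - ν')| ≤ M ^ 2 * (t₁ * |ν' - ν|) := by
    rw [abs_mul, abs_mul, abs_mul, abs_of_nonneg ht₁₀, abs_of_nonneg ht₂₀,
      abs_of_nonneg (mul_nonneg hb₀ hd₀), abs_sub_comm]
    calc t₁ * t₂ * (π⁻¹ * ρ⁻¹) * |ν' - ν| ≤ t₁ * 1 * (M * M) * |ν' - ν| := by gcongr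
      _ = _ := by ring
  have hπ_t₁ : t₁ * (2 * B * K * M ^ 2 * |π' - π|) ≤ 2 * B * K * M ^ 2 * |π' - π| :=
    mul_le_of_le_one_left (by positivity) ht₁₁
  rw [abs_le] at h₁ h₂ h₃ h₄ h₅ ⊢
  constructor <;> linarith

lemma sq_drScore_sub_le {t₁ t₂ y μ' ν' π' ρ' μ ν π ρ B K M : ℝ} (hK : 0 < K) (hM : 0 < M)
    (ht₁ : t₁ ∈ Icc (0 : ℝ) 1) (ht₂ : t₂ ∈ Icc (0 : ℝ) 1) (hy : |y| ≤ B)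
    (hν' : |ν'| ≤ B) (hμ : |μ| ≤ B) (hν : |ν| ≤ B)
    (hπ' : 1 / K ≤ π') (hρ' : 1 / K ≤ ρ') (hπ : 1 / M ≤ π) (hρ : 1 / M ≤ ρ) :
    (drScore t₁ t₂ y μ' ν' π' ρ' - drScore t₁ t₂ y μ ν π ρ) ^ 2
      ≤ drScoreConst B K M
        * (t₁ * (ν' - ν) ^ 2 + (μ' - μ) ^ 2 + (π' - π) ^ 2 + t₁ * (ρ' - ρ) ^ 2) := by
  have ht₁_sq : ∀ x : ℝ, (t₁ * |x|) ^ 2 ≤ t₁ * x ^ 2 := fun x => by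
    rw [mul_pow, sq_abs]
    exact mul_le_mul_of_nonneg_right (pow_le_of_le_one ht₁.1 ht₁.2 two_ne_zero) (sq_nonneg x)
  calc (drScore t₁ t₂ y μ' ν' π' ρ' - drScore t₁ t₂ y μ ν π ρ) ^ 2
      = |drScore t₁ t₂ y μ' ν' π' ρ' - drScore t₁ t₂ y μ ν π ρ| ^ 2 := (sq_abs _).symm
    _ ≤ ((K + M ^ 2) * (t₁ * |ν' - ν|) + (1 + K) * |μ' - μ|
        + 2 * B * K * M * (1 + M) * |π' - π| + 2 * B * K ^ 2 * M * (t₁ * |ρ' - ρ|)) ^ 2 :=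
      pow_le_pow_left₀ (abs_nonneg _)
        (abs_drScore_sub_le hK hM ht₁ ht₂ hy hν' hμ hν hπ' hρ' hπ hρ) 2
    _ ≤ drScoreConst B K M
        * ((t₁ * |ν' - ν|) ^ 2 + |μ' - μ| ^ 2 + |π' - π| ^ 2 + (t₁ * |ρ' - ρ|) ^ 2) :=
      sq_add_four_le_mul _ _ _ _ _ _ _ _
    _ ≤ _ := by
      rw [sq_abs, sq_abs]
      gcongr
      · exact (drScoreConst_pos hK).le
      · exact ht₁_sq _
      · exact ht₁_sq _

section Integral

variable {Ω : Type*} [MeasurableSpace Ω] {P : Measure Ω}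

lemma integral_le_mul_integral_mul_of_one_div_le {f w : Ω → ℝ} {M : ℝ} (hM : 0 < M)
    (hf : ∀ ω, 0 ≤ f ω) (hw : ∀ᵐ ω ∂P, 1 / M ≤ w ω)
    (hwf : Integrable (fun ω => w ω * f ω) P) :
    ∫ ω, f ω ∂P ≤ M * ∫ ω, w ω * f ω ∂P := by
  rw [← integral_const_mul]
  refine integral_mono_of_nonneg (ae_of_all _ hf) (hwf.const_mul M) ?_
  filter_upwards [hw] with ω hω
  have hMw : 1 ≤ M * w ω := by rwa [div_le_iff₀' hM] at hω
  calc f ω = 1 * f ω := (one_mul _).symm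
    _ ≤ M * w ω * f ω := by gcongr; exact hf ω
    _ = M * (w ω * f ω) := mul_assoc _ _ _

lemma MeasureTheory.MemLp.sq_top {g : Ω → ℝ} (hg : MemLp g ∞ P) :
    MemLp (fun ω => g ω ^ 2) ∞ P := by
  simp_rw [sq]
  exact hg.mul hg

variable {t₁ t₂ y μ' ν' π' ρ' μ ν π ρ : Ω → ℝ} {B K M : ℝ}

lemma integral_sq_drScore_sub_le (hK : 0 < K) (hM : 0 < M)
    (ht₁ : ∀ ω, t₁ ω ∈ Icc (0 : ℝ) 1) (ht₂ : ∀ ω, t₂ ω ∈ Icc (0 : ℝ) 1)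
    (hbdd : ∀ᵐ ω ∂P, |y ω| ≤ B ∧ |ν ω| ≤ B ∧ |μ ω| ≤ B) (hν' : ∀ ω, |ν' ω| ≤ B)
    (hπ' : ∀ ω, 1 / K ≤ π' ω) (hρ' : ∀ ω, 1 / K ≤ ρ' ω)
    (hpos : ∀ᵐ ω ∂P, 1 / M ≤ π ω ∧ 1 / M ≤ ρ ω)
    (iν : Integrable (fun ω => t₁ ω * (ν' ω - ν ω) ^ 2) P)
    (iμ : Integrable (fun ω => (μ' ω - μ ω) ^ 2) P)
    (iπ : Integrable (fun ω => (π' ω - π ω) ^ 2) P)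
    (iρ : Integrable (fun ω => t₁ ω * (ρ' ω - ρ ω) ^ 2) P) :
    ∫ ω, (drScore (t₁ ω) (t₂ ω) (y ω) (μ' ω) (ν' ω) (π' ω) (ρ' ω)
        - drScore (t₁ ω) (t₂ ω) (y ω) (μ ω) (ν ω) (π ω) (ρ ω)) ^ 2 ∂P
      ≤ drScoreConst B K M * ((∫ ω, t₁ ω * (ν' ω - ν ω) ^ 2 ∂P) + (∫ ω, (μ' ω - μ ω) ^ 2 ∂P)
        + (∫ ω, (π' ω - π ω) ^ 2 ∂P) + ∫ ω, t₁ ω * (ρ' ω - ρ ω) ^ 2 ∂P) := by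
  calc _ ≤ ∫ ω, drScoreConst B K M * (t₁ ω * (ν' ω - ν ω) ^ 2 + (μ' ω - μ ω) ^ 2
          + (π' ω - π ω) ^ 2 + t₁ ω * (ρ' ω - ρ ω) ^ 2) ∂P := by
        refine integral_mono_of_nonneg (ae_of_all _ fun ω => sq_nonneg _)
          ((((iν.add iμ).add iπ).add iρ).const_mul _) ?_
        filter_upwards [hbdd, hpos] with ω ⟨hy, hν, hμ⟩ ⟨hπ, hρ⟩
        exact sq_drScore_sub_le hK hM (ht₁ ω) (ht₂ ω) hy (hν' ω) hμ hν (hπ' ω) (hρ' ω) hπ hρ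
    _ = _ := by
        rw [integral_const_mul, integral_add _ iρ, integral_add _ iπ, integral_add iν iμ]
        · exact iν.add iμ
        · exact (iν.add iμ).add iπ

theorem integral_sq_drScore_sub_le_of_moments [IsFiniteMeasure P] (hK : 0 < K) (hM : 0 < M)
    (ht₁m : AEStronglyMeasurable t₁ P) (ht₁ : ∀ ω, t₁ ω ∈ Icc (0 : ℝ) 1)
    (ht₂ : ∀ ω, t₂ ω ∈ Icc (0 : ℝ) 1)
    (hbdd : ∀ᵐ ω ∂P, |y ω| ≤ B ∧ |ν ω| ≤ B ∧ |μ ω| ≤ B) (hν' : ∀ ω, |ν' ω| ≤ B)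
    (hπ' : ∀ ω, 1 / K ≤ π' ω) (hρ' : ∀ ω, 1 / K ≤ ρ' ω)
    (hpos : ∀ᵐ ω ∂P, 1 / M ≤ π ω ∧ 1 / M ≤ ρ ω)
    (hμ'm : MemLp μ' ∞ P) (hν'm : MemLp ν' ∞ P) (hπ'm : MemLp π' ∞ P) (hρ'm : MemLp ρ' ∞ P)
    (hμm : MemLp μ ∞ P) (hνm : MemLp ν ∞ P) (hπm : MemLp π ∞ P) (hρm : MemLp ρ ∞ P)
    (hπ_mom : ∫ ω, t₁ ω * (μ' ω - μ ω) ^ 2 ∂P = ∫ ω, π ω * (μ' ω - μ ω) ^ 2 ∂P)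
    (hρ_mom : ∫ ω, t₁ ω * t₂ ω * (ν' ω - ν ω) ^ 2 ∂P
      = ∫ ω, t₁ ω * ρ ω * (ν' ω - ν ω) ^ 2 ∂P) :
    ∫ ω, (drScore (t₁ ω) (t₂ ω) (y ω) (μ' ω) (ν' ω) (π' ω) (ρ' ω)
        - drScore (t₁ ω) (t₂ ω) (y ω) (μ ω) (ν ω) (π ω) (ρ ω)) ^ 2 ∂P
      ≤ drScoreConst B K M * (M + 1)
        * ((∫ ω, t₁ ω * t₂ ω * (ν' ω - ν ω) ^ 2 ∂P) + (∫ ω, t₁ ω * (μ' ω - μ ω) ^ 2 ∂P)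
          + (∫ ω, (π' ω - π ω) ^ 2 ∂P) + ∫ ω, t₁ ω * (ρ' ω - ρ ω) ^ 2 ∂P) := by
  have ht₁' : MemLp t₁ ∞ P := memLp_top_of_bound ht₁m 1 (ae_of_all _ fun ω =>
    abs_le.2 ⟨by linarith [(ht₁ ω).1], (ht₁ ω).2⟩)
  have hDν := (hν'm.sub hνm).sq_top
  have hDμ := (hμ'm.sub hμm).sq_top
  have hDρ := (hρ'm.sub hρm).sq_top
  have hν_le : ∫ ω, t₁ ω * (ν' ω - ν ω) ^ 2 ∂P
      ≤ M * ∫ ω, t₁ ω * t₂ ω * (ν' ω - ν ω) ^ 2 ∂P := by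
    calc _ ≤ M * ∫ ω, ρ ω * (t₁ ω * (ν' ω - ν ω) ^ 2) ∂P :=
          integral_le_mul_integral_mul_of_one_div_le hM
            (fun ω => mul_nonneg (ht₁ ω).1 (sq_nonneg _)) (hpos.mono fun _ h => h.2)
            (((hDν.mul ht₁' (r := ∞)).mul hρm).integrable le_top)
      _ = _ := by
          rw [hρ_mom]
          congr 1
          exact integral_congr_ae (ae_of_all _ fun ω => by ring)
  have hμ_le : ∫ ω, (μ' ω - μ ω) ^ 2 ∂P ≤ M * ∫ ω, t₁ ω * (μ' ω - μ ω) ^ 2 ∂P := by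
    rw [hπ_mom]
    exact integral_le_mul_integral_mul_of_one_div_le hM (fun ω => sq_nonneg _)
      (hpos.mono fun _ h => h.1) ((hDμ.mul hπm (r := ∞)).integrable le_top)
  have iν : Integrable (fun ω => t₁ ω * (ν' ω - ν ω) ^ 2) P :=
    (hDν.mul ht₁' (r := ∞)).integrable le_top
  have iρ : Integrable (fun ω => t₁ ω * (ρ' ω - ρ ω) ^ 2) P :=
    (hDρ.mul ht₁' (r := ∞)).integrable le_top
  have hIν : 0 ≤ ∫ ω, t₁ ω * t₂ ω * (ν' ω - ν ω) ^ 2 ∂P := integral_nonneg fun ω =>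
    mul_nonneg (mul_nonneg (ht₁ ω).1 (ht₂ ω).1) (sq_nonneg _)
  have hIμ : 0 ≤ ∫ ω, t₁ ω * (μ' ω - μ ω) ^ 2 ∂P := integral_nonneg fun ω =>
    mul_nonneg (ht₁ ω).1 (sq_nonneg _)
  have hIπ : 0 ≤ ∫ ω, (π' ω - π ω) ^ 2 ∂P := integral_nonneg fun ω => sq_nonneg _
  have hIρ : 0 ≤ ∫ ω, t₁ ω * (ρ' ω - ρ ω) ^ 2 ∂P := integral_nonneg fun ω =>
    mul_nonneg (ht₁ ω).1 (sq_nonneg _)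
  refine (integral_sq_drScore_sub_le hK hM ht₁ ht₂ hbdd hν' hπ' hρ' hpos iν
    (hDμ.integrable le_top) ((hπ'm.sub hπm).sq_top.integrable le_top) iρ).trans ?_
  rw [mul_assoc]
  gcongr
  · exact (drScoreConst_pos hK).le
  · nlinarith

end Integral

lemma memLp_top_comp {Ω X : Type*} [MeasurableSpace Ω] [MeasurableSpace X] {P : Measure Ω}
    {f : X → ℝ} {S : Ω → X} (hf : Measurable f) (hS : Measurable S)
    (hb : ∃ C, ∀ x, |f x| ≤ C) : MemLp (fun ω => f (S ω)) ∞ P :=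
  let ⟨C, hC⟩ := hb
  memLp_top_of_bound (hf.comp hS).aestronglyMeasurable C (ae_of_all _ fun ω => hC (S ω))

lemma exists_abs_sub_sq_le {X : Type*} {f g : X → ℝ} (hf : ∃ C, ∀ x, |f x| ≤ C)
    (hg : ∃ C, ∀ x, |g x| ≤ C) : ∃ C, ∀ x, |(f x - g x) ^ 2| ≤ C := by
  obtain ⟨a, ha⟩ := hf
  obtain ⟨b, hb⟩ := hg
  refine ⟨(a + b) ^ 2, fun x => ?_⟩
  rw [abs_pow]
  exact pow_le_pow_left₀ (abs_nonneg _) ((abs_sub _ _).trans (add_le_add (ha x) (hb x))) 2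

lemma mem_Icc_of_eq_zero_or_eq_one {t : ℝ} (ht : t = 0 ∨ t = 1) : t ∈ Icc (0 : ℝ) 1 := by
  rcases ht with rfl | rfl <;> simp

theorem dte_score_second_moment_stability_general (M K B : ℝ) (hM : 0 < M) (hK : 0 < K) :
    ∃ C : ℝ, 0 < C ∧
      ∀ (Ω : Type) (_ : MeasurableSpace Ω) (P : Measure Ω), IsProbabilityMeasure P →
      ∀ (d₁ d₂ : ℕ) (S1 : Ω → (Fin d₁ → ℝ)) (S2 : Ω → (Fin d₂ → ℝ)),
        Measurable S1 → Measurable S2 →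
      ∀ T1 T2 : Ω → ℝ, Measurable T1 → Measurable T2 →
        (∀ ω, T1 ω = 0 ∨ T1 ω = 1) → (∀ ω, T2 ω = 0 ∨ T2 ω = 1) →
      ∀ Y11 Y : Ω → ℝ, Measurable Y11 → Measurable Y → (∃ C', ∀ ω, |Y11 ω| ≤ C') →
        (∀ ω, T1 ω * T2 ω * Y ω = T1 ω * T2 ω * Y11 ω) →
      ∀ (π0 μ0 : (Fin d₁ → ℝ) → ℝ) (ρ0 ν0 : (Fin d₁ → ℝ) × (Fin d₂ → ℝ) → ℝ),
        Measurable π0 → Measurable μ0 → Measurable ρ0 → Measurable ν0 →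
        (∃ C', ∀ x, |π0 x| ≤ C') → (∃ C', ∀ x, |μ0 x| ≤ C') →
        (∃ C', ∀ x, |ρ0 x| ≤ C') → (∃ C', ∀ x, |ν0 x| ≤ C') →
        (∀ h : (Fin d₁ → ℝ) → ℝ, Measurable h → (∃ C', ∀ x, |h x| ≤ C') →
          ∫ ω, T1 ω * h (S1 ω) ∂P = ∫ ω, π0 (S1 ω) * h (S1 ω) ∂P) →
        (∀ h : (Fin d₁ → ℝ) × (Fin d₂ → ℝ) → ℝ, Measurable h → (∃ C', ∀ x, |h x| ≤ C') →
          ∫ ω, T1 ω * T2 ω * h (S1 ω, S2 ω) ∂P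
            = ∫ ω, T1 ω * ρ0 (S1 ω, S2 ω) * h (S1 ω, S2 ω) ∂P) →
        (∀ h : (Fin d₁ → ℝ) × (Fin d₂ → ℝ) → ℝ, Measurable h → (∃ C', ∀ x, |h x| ≤ C') →
          ∫ ω, T1 ω * T2 ω * Y11 ω * h (S1 ω, S2 ω) ∂P
            = ∫ ω, T1 ω * T2 ω * ν0 (S1 ω, S2 ω) * h (S1 ω, S2 ω) ∂P) →
        (∀ h : (Fin d₁ → ℝ) → ℝ, Measurable h → (∃ C', ∀ x, |h x| ≤ C') →
          ∫ ω, T1 ω * Y11 ω * h (S1 ω) ∂P = ∫ ω, T1 ω * μ0 (S1 ω) * h (S1 ω) ∂P) →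
        (∀ᵐ ω ∂P, 1 / M ≤ π0 (S1 ω) ∧ 1 / M ≤ ρ0 (S1 ω, S2 ω)) →
        (∀ᵐ ω ∂P, |Y ω| ≤ B ∧ |ν0 (S1 ω, S2 ω)| ≤ B ∧ |μ0 (S1 ω)| ≤ B) →
      ∀ (πh μh : (Fin d₁ → ℝ) → ℝ) (ρh νh : (Fin d₁ → ℝ) × (Fin d₂ → ℝ) → ℝ),
        Measurable πh → Measurable μh → Measurable ρh → Measurable νh →
        (∀ x, 1 / K ≤ πh x) → (∀ x, 1 / K ≤ ρh x) →
        (∀ x, |νh x| ≤ B) → (∀ x, |μh x| ≤ B) →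
        (∃ C', ∀ x, |πh x| ≤ C') → (∃ C', ∀ x, |ρh x| ≤ C') →
      (∫ ω, ((μh (S1 ω) + T1 ω * (νh (S1 ω, S2 ω) - μh (S1 ω)) / πh (S1 ω)
            + T1 ω * T2 ω * (Y ω - νh (S1 ω, S2 ω)) / (πh (S1 ω) * ρh (S1 ω, S2 ω)))
          - (μ0 (S1 ω) + T1 ω * (ν0 (S1 ω, S2 ω) - μ0 (S1 ω)) / π0 (S1 ω)
            + T1 ω * T2 ω * (Y ω - ν0 (S1 ω, S2 ω)) / (π0 (S1 ω) * ρ0 (S1 ω, S2 ω)))) ^ 2 ∂P)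
        ≤ C * ((∫ ω, T1 ω * T2 ω * (νh (S1 ω, S2 ω) - ν0 (S1 ω, S2 ω)) ^ 2 ∂P)
            + (∫ ω, T1 ω * (μh (S1 ω) - μ0 (S1 ω)) ^ 2 ∂P)
            + (∫ ω, (πh (S1 ω) - π0 (S1 ω)) ^ 2 ∂P)
            + ∫ ω, T1 ω * (ρh (S1 ω, S2 ω) - ρ0 (S1 ω, S2 ω)) ^ 2 ∂P) := by
  refine ⟨drScoreConst B K M * (M + 1), mul_pos (drScoreConst_pos hK) (by linarith), ?_⟩
  intro Ω _ P _ d₁ d₂ S1 S2 hS1 hS2 T1 T2 hT1 _ hT1b hT2b _ Y _ _ _ _ π0 μ0 ρ0 ν0 hπ0 hμ0 hρ0 hν0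
    hπ0b hμ0b hρ0b hν0b hmomπ hmomρ _ _ hpos hbdd πh μh ρh νh hπh hμh hρh hνh hπhK hρhK hνhB hμhB
    hπhb hρhb
  have hS : Measurable fun ω => (S1 ω, S2 ω) := hS1.prodMk hS2
  exact integral_sq_drScore_sub_le_of_moments hK hM hT1.aestronglyMeasurable
    (fun ω => mem_Icc_of_eq_zero_or_eq_one (hT1b ω)) (fun ω => mem_Icc_of_eq_zero_or_eq_one (hT2b ω))
    hbdd (fun _ => hνhB _) (fun _ => hπhK _) (fun _ => hρhK _) hpos
    (memLp_top_comp hμh hS1 ⟨B, hμhB⟩) (memLp_top_comp hνh hS ⟨B, hνhB⟩)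
    (memLp_top_comp hπh hS1 hπhb) (memLp_top_comp hρh hS hρhb)
    (memLp_top_comp hμ0 hS1 hμ0b) (memLp_top_comp hν0 hS hν0b)
    (memLp_top_comp hπ0 hS1 hπ0b) (memLp_top_comp hρ0 hS hρ0b)
    (hmomπ _ (by fun_prop) (exists_abs_sub_sq_le ⟨B, hμhB⟩ hμ0b))
    (hmomρ _ (by fun_prop) (exists_abs_sub_sq_le ⟨B, hνhB⟩ hν0b))

/-- Second-moment stability of the dynamic doubly robust score: there is a
constant `C` depending only on `(M, K, B)` such that, for every dynamic treatment setup with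
bounded nuisances and bounded nuisance estimates, the squared score difference is controlled by
the four nuisance estimation errors. -/
theorem dte_score_second_moment_stability (M K B : ℝ) (hM : 0 < M) (hK : 0 < K) (hB : 0 < B) :
    ∃ C : ℝ, 0 < C ∧
      ∀ (Ω : Type) (_ : MeasurableSpace Ω) (P : Measure Ω), IsProbabilityMeasure P →
      ∀ (d₁ d₂ : ℕ) (S1 : Ω → (Fin d₁ → ℝ)) (S2 : Ω → (Fin d₂ → ℝ)),
        Measurable S1 → Measurable S2 →
      ∀ T1 T2 : Ω → ℝ, Measurable T1 → Measurable T2 →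
        (∀ ω, T1 ω = 0 ∨ T1 ω = 1) → (∀ ω, T2 ω = 0 ∨ T2 ω = 1) →
      ∀ Y11 Y : Ω → ℝ, Measurable Y11 → Measurable Y → (∃ C', ∀ ω, |Y11 ω| ≤ C') →
        (∀ ω, T1 ω * T2 ω * Y ω = T1 ω * T2 ω * Y11 ω) →
      ∀ (π0 μ0 : (Fin d₁ → ℝ) → ℝ) (ρ0 ν0 : (Fin d₁ → ℝ) × (Fin d₂ → ℝ) → ℝ),
        Measurable π0 → Measurable μ0 → Measurable ρ0 → Measurable ν0 →
        (∃ C', ∀ x, |π0 x| ≤ C') → (∃ C', ∀ x, |μ0 x| ≤ C') →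
        (∃ C', ∀ x, |ρ0 x| ≤ C') → (∃ C', ∀ x, |ν0 x| ≤ C') →
        (∀ h : (Fin d₁ → ℝ) → ℝ, Measurable h → (∃ C', ∀ x, |h x| ≤ C') →
          ∫ ω, T1 ω * h (S1 ω) ∂P = ∫ ω, π0 (S1 ω) * h (S1 ω) ∂P) →
        (∀ h : (Fin d₁ → ℝ) × (Fin d₂ → ℝ) → ℝ, Measurable h → (∃ C', ∀ x, |h x| ≤ C') →
          ∫ ω, T1 ω * T2 ω * h (S1 ω, S2 ω) ∂P
            = ∫ ω, T1 ω * ρ0 (S1 ω, S2 ω) * h (S1 ω, S2 ω) ∂P) →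
        (∀ h : (Fin d₁ → ℝ) × (Fin d₂ → ℝ) → ℝ, Measurable h → (∃ C', ∀ x, |h x| ≤ C') →
          ∫ ω, T1 ω * T2 ω * Y11 ω * h (S1 ω, S2 ω) ∂P
            = ∫ ω, T1 ω * T2 ω * ν0 (S1 ω, S2 ω) * h (S1 ω, S2 ω) ∂P) →
        (∀ h : (Fin d₁ → ℝ) → ℝ, Measurable h → (∃ C', ∀ x, |h x| ≤ C') →
          ∫ ω, T1 ω * Y11 ω * h (S1 ω) ∂P = ∫ ω, T1 ω * μ0 (S1 ω) * h (S1 ω) ∂P) →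
        (∀ᵐ ω ∂P, 1 / M ≤ π0 (S1 ω) ∧ 1 / M ≤ ρ0 (S1 ω, S2 ω)) →
        (∀ᵐ ω ∂P, |Y ω| ≤ B ∧ |ν0 (S1 ω, S2 ω)| ≤ B ∧ |μ0 (S1 ω)| ≤ B) →
      ∀ (πh μh : (Fin d₁ → ℝ) → ℝ) (ρh νh : (Fin d₁ → ℝ) × (Fin d₂ → ℝ) → ℝ),
        Measurable πh → Measurable μh → Measurable ρh → Measurable νh →
        (∀ x, 1 / K ≤ πh x) → (∀ x, 1 / K ≤ ρh x) →
        (∀ x, |νh x| ≤ B) → (∀ x, |μh x| ≤ B) →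
        (∃ C', ∀ x, |πh x| ≤ C') → (∃ C', ∀ x, |ρh x| ≤ C') →
      (∫ ω, ((μh (S1 ω) + T1 ω * (νh (S1 ω, S2 ω) - μh (S1 ω)) / πh (S1 ω)
            + T1 ω * T2 ω * (Y ω - νh (S1 ω, S2 ω)) / (πh (S1 ω) * ρh (S1 ω, S2 ω)))
          - (μ0 (S1 ω) + T1 ω * (ν0 (S1 ω, S2 ω) - μ0 (S1 ω)) / π0 (S1 ω)
            + T1 ω * T2 ω * (Y ω - ν0 (S1 ω, S2 ω)) / (π0 (S1 ω) * ρ0 (S1 ω, S2 ω)))) ^ 2 ∂P)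
        ≤ C * ((∫ ω, T1 ω * T2 ω * (νh (S1 ω, S2 ω) - ν0 (S1 ω, S2 ω)) ^ 2 ∂P)
            + (∫ ω, T1 ω * (μh (S1 ω) - μ0 (S1 ω)) ^ 2 ∂P)
            + (∫ ω, (πh (S1 ω) - π0 (S1 ω)) ^ 2 ∂P)
            + ∫ ω, T1 ω * (ρh (S1 ω, S2 ω) - ρ0 (S1 ω, S2 ω)) ^ 2 ∂P) :=
  dte_score_second_moment_stability_general M K B hM hK
end
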